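/- arXiv:2409.06376 — 6 statements merged into one kernel-verified Lean document; each statement's English description precedes it below -/
import Mathlib

section
/- Let C ⊆ ℕ^p be an integer cone with C ≠ {0}, let ⪯ be an admissible total order on ℕ^p, and let S be an ordinary C-semigroup, i.e., S = S_c = {0} ∪ {x ∈ C : c ⪯ x} for some c ∈ C. Then g(S) < e(S). -/
open Set BigOperators

/-- `C` is an integer cone: the intersection with `ℕ^p` of the set of nonnegative
real linear combinations of a finite set `A ⊆ ℕ^p`. -/
def IsIntegerCone (p : ℕ) (C : Set (Fin p → ℕ)) : Prop :=
  ∃ A : Finset (Fin p → ℕ),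
    C = {x : Fin p → ℕ | ∃ l : (Fin p → ℕ) → ℝ,
      (∀ a, 0 ≤ l a) ∧ ∀ i, (x i : ℝ) = ∑ a ∈ A, l a * (a i : ℝ)}

/-- An admissible total order on `ℕ^p`: total, compatible with addition,
with `0` minimum, and with finite down-sets. -/
structure AdmissibleOrder (p : ℕ) where
  le : (Fin p → ℕ) → (Fin p → ℕ) → Prop
  le_refl : ∀ x, le x x
  le_antisymm : ∀ x y, le x y → le y x → x = y
  le_trans : ∀ x y z, le x y → le y z → le x z
  le_total : ∀ x y, le x y ∨ le y x
  add_right : ∀ x y z, le x y → le (x + z) (y + z)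
  zero_le : ∀ x, le 0 x
  finite_le : ∀ f, {x : Fin p → ℕ | le x f}.Finite

/-- Strict version of an admissible order. -/
def AdmissibleOrder.lt {p : ℕ} (O : AdmissibleOrder p) (x y : Fin p → ℕ) : Prop :=
  O.le x y ∧ x ≠ y

/-- `S` is a `C`-semigroup: a submonoid of `ℕ^p` contained in `C` with finite complement in `C`. -/
def IsCSemigroup {p : ℕ} (C S : Set (Fin p → ℕ)) : Prop :=
  S ⊆ C ∧ 0 ∈ S ∧ (∀ x ∈ S, ∀ y ∈ S, x + y ∈ S) ∧ (C \ S).Finite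

/-- `f` is the Frobenius element of `S`: the `⪯`-maximum of `C \ S`. -/
def IsFrob {p : ℕ} (O : AdmissibleOrder p) (C S : Set (Fin p → ℕ)) (f : Fin p → ℕ) : Prop :=
  f ∈ C \ S ∧ ∀ x ∈ C \ S, O.le x f

/-- `B(f) = {x ∈ C : f - x ∈ C}`. -/
def BSet {p : ℕ} (C : Set (Fin p → ℕ)) (f : Fin p → ℕ) : Set (Fin p → ℕ) :=
  {x | x ∈ C ∧ ∃ y ∈ C, x + y = f}

/-- `N(f) = #{x ∈ C \ {0} : x ⪯ f}`. -/
noncomputable def NNum {p : ℕ} (O : AdmissibleOrder p) (C : Set (Fin p → ℕ)) (f : Fin p → ℕ) : ℕ :=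
  {x | x ∈ C ∧ x ≠ 0 ∧ O.le x f}.ncard

/-- The genus of `S`: the number of gaps `#(C \ S)`. -/
noncomputable def genusOf {p : ℕ} (C S : Set (Fin p → ℕ)) : ℕ := (C \ S).ncard

/-- The number of small elements `n(S) = #{s ∈ S : s ≺ Fb(S)}`; an element is smaller than
the Frobenius element iff it is strictly smaller than some gap. -/
noncomputable def smallCount {p : ℕ} (O : AdmissibleOrder p) (C S : Set (Fin p → ℕ)) : ℕ :=
  {s | s ∈ S ∧ ∃ h ∈ C \ S, O.lt s h}.ncard

/-- The minimal generating set of `S`. -/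
def msg {p : ℕ} (S : Set (Fin p → ℕ)) : Set (Fin p → ℕ) :=
  (S \ {0}) \ {x | ∃ a ∈ S \ {0}, ∃ b ∈ S \ {0}, a + b = x}

/-- `S` is a `B`-semigroup with respect to `f`. -/
def IsBSemigroup {p : ℕ} (O : AdmissibleOrder p) (C S : Set (Fin p → ℕ)) (f : Fin p → ℕ) : Prop :=
  IsCSemigroup C S ∧ IsFrob O C S f ∧ C \ BSet C f ⊆ S

/-- `a = α(S)`, the `⪯`-minimum of `(S \ {0}) ∩ B(f)`, with the convention `α(S) = f`
when `S ∩ B(f) = {0}`. -/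
def IsAlpha {p : ℕ} (O : AdmissibleOrder p) (C S : Set (Fin p → ℕ)) (f a : Fin p → ℕ) : Prop :=
  (a ∈ S ∧ a ≠ 0 ∧ a ∈ BSet C f ∧ ∀ x ∈ S, x ≠ 0 → x ∈ BSet C f → O.le a x)
  ∨ ((∀ x ∈ S ∩ BSet C f, x = 0) ∧ a = f)

/-- `x` is a special gap of `T`. -/
def SpecialGap {p : ℕ} (C T : Set (Fin p → ℕ)) (x : Fin p → ℕ) : Prop :=
  x ∈ C \ T ∧ x + x ∈ T ∧ ∀ t ∈ T, t ≠ 0 → x + t ∈ T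

/-- `l = λ(S)`, the `⪯`-largest gap of `S` lying outside `B(f)` (no convention case). -/
def IsLambdaGap {p : ℕ} (O : AdmissibleOrder p) (C S : Set (Fin p → ℕ)) (f l : Fin p → ℕ) : Prop :=
  l ∈ C \ S ∧ l ∉ BSet C f ∧ ∀ x ∈ C \ S, x ∉ BSet C f → O.le x l

/-- `l = λ(S)`, with the convention `λ(S) = 0` when `S` has no gap outside `B(f)`. -/
def IsLambda {p : ℕ} (O : AdmissibleOrder p) (C S : Set (Fin p → ℕ)) (f l : Fin p → ℕ) : Prop :=
  IsLambdaGap O C S f l ∨ ((∀ x ∈ C \ S, x ∈ BSet C f) ∧ l = 0)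

/-- `x ≤_C y` iff `y - x ∈ C`. -/
def leC {p : ℕ} (C : Set (Fin p → ℕ)) (x y : Fin p → ℕ) : Prop := ∃ d ∈ C, x + d = y

/-- The ordinary `C`-semigroup `S_c = {0} ∪ {x ∈ C : c ⪯ x}`. -/
def ordinarySemigroup {p : ℕ} (O : AdmissibleOrder p) (C : Set (Fin p → ℕ))
    (c : Fin p → ℕ) : Set (Fin p → ℕ) :=
  insert 0 {x | x ∈ C ∧ O.le c x}

/-- `S` is an arf semigroup in `C`. -/
def ArfSemigroup {p : ℕ} (C S : Set (Fin p → ℕ)) : Prop :=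
  ∀ x ∈ S, ∀ y ∈ S, ∀ z ∈ S, leC C z y → leC C y x →
    ∀ w : Fin p → ℕ, w + z = x + y → w ∈ S

/-- `S` is a saturated semigroup in `C`: whenever `s, s₁, …, s_r ∈ S` with `s_i ≤_C s`,
and `z : Fin r → ℤ` with `z₁s₁ + ⋯ + z_rs_r ∈ C` (as an element `t` of `ℕ^p`),
then `s + z₁s₁ + ⋯ + z_rs_r = s + t ∈ S`. -/
def SaturatedSemigroup {p : ℕ} (C S : Set (Fin p → ℕ)) : Prop :=
  ∀ (r : ℕ) (s : Fin p → ℕ) (si : Fin r → (Fin p → ℕ)) (z : Fin r → ℤ),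
    s ∈ S → (∀ i, si i ∈ S) → (∀ i, leC C (si i) s) →
    ∀ t ∈ C, (∀ j, (t j : ℤ) = ∑ i, z i * (si i j : ℤ)) → s + t ∈ S

section aux
variable {p : ℕ} {C : Set (Fin p → ℕ)}

lemma cone_zero_mem (hC : IsIntegerCone p C) : (0 : Fin p → ℕ) ∈ C := by
  obtain ⟨A, rfl⟩ := hC
  exact ⟨0, fun a => le_refl 0, fun i => by simp⟩

lemma cone_add_mem (hC : IsIntegerCone p C) {x y : Fin p → ℕ} (hx : x ∈ C) (hy : y ∈ C) :
    x + y ∈ C := by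
  obtain ⟨A, rfl⟩ := hC
  obtain ⟨l1, hl1, he1⟩ := hx
  obtain ⟨l2, hl2, he2⟩ := hy
  refine ⟨l1 + l2, fun a => add_nonneg (hl1 a) (hl2 a), fun i => ?_⟩
  have : ((x + y) i : ℝ) = (x i : ℝ) + (y i : ℝ) := by simp
  rw [this, he1 i, he2 i, ← Finset.sum_add_distrib]
  exact Finset.sum_congr rfl (fun a _ => by simp [add_mul])

lemma cone_sum_mem (hC : IsIntegerCone p C) (ms : Multiset (Fin p → ℕ))
    (h : ∀ g ∈ ms, g ∈ C) : ms.sum ∈ C := by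
  induction ms using Multiset.induction_on with
  | empty => simpa using cone_zero_mem hC
  | cons g s ih =>
      rw [Multiset.sum_cons]
      exact cone_add_mem hC (h g (Multiset.mem_cons_self g s))
        (ih fun g' hg' => h g' (Multiset.mem_cons_of_mem hg'))

lemma msum_ne_zero (ms : Multiset (Fin p → ℕ)) (hpos : 0 < Multiset.card ms)
    (h : ∀ g ∈ ms, g ≠ 0) : ms.sum ≠ 0 := by
  obtain ⟨g, hg⟩ := Multiset.card_pos_iff_exists_mem.mp hpos
  obtain ⟨s, rfl⟩ := Multiset.exists_cons_of_mem hg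
  rw [Multiset.sum_cons]
  intro h0
  apply h g (Multiset.mem_cons_self g s)
  funext i
  have := congrFun h0 i
  simp only [Pi.add_apply, Pi.zero_apply] at this
  simpa using Nat.eq_zero_of_add_eq_zero_right this

lemma msum_bound (ms : Multiset (Fin p → ℕ)) (B : Fin p → ℕ)
    (h : ∀ g ∈ ms, ∀ i, g i ≤ B i) (i : Fin p) :
    ms.sum i ≤ Multiset.card ms * B i := by
  induction ms using Multiset.induction_on with
  | empty => simp
  | cons g s ih =>
      rw [Multiset.sum_cons, Multiset.card_cons]
      have h1 := h g (Multiset.mem_cons_self g s) i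
      have h2 := ih fun g' hg' => h g' (Multiset.mem_cons_of_mem hg')
      calc (g + s.sum) i = g i + s.sum i := rfl
        _ ≤ B i + Multiset.card s * B i := add_le_add h1 h2
        _ = (Multiset.card s + 1) * B i := by ring

end aux

section aux2
variable {p : ℕ} (O : AdmissibleOrder p)

lemma ad_le_add_left (x : Fin p → ℕ) {y z : Fin p → ℕ} (h : O.le y z) :
    O.le (x + y) (x + z) := by
  rw [add_comm x y, add_comm x z]; exact O.add_right y z x h

lemma ad_le_self_add (x y : Fin p → ℕ) : O.le x (x + y) := by
  have := ad_le_add_left O x (O.zero_le y)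
  simpa using this

lemma ad_cancel {x y z : Fin p → ℕ} (h : O.le (x + z) (y + z)) : O.le x y := by
  rcases O.le_total x y with h' | h'
  · exact h'
  · have := O.le_antisymm _ _ h (O.add_right y x z h')
    have hxy : x = y := by
      funext i
      have := congrFun this i
      simpa using this
    rw [hxy]; exact O.le_refl y

end aux2

lemma chain_bound {p : ℕ} {C : Set (Fin p → ℕ)} (hC : IsIntegerCone p C)
    (O : AdmissibleOrder p) (ms : Multiset (Fin p → ℕ))
    (h : ∀ g ∈ ms, g ∈ C ∧ g ≠ 0) :
    Multiset.card ms ≤ {x | x ∈ C ∧ x ≠ 0 ∧ O.le x ms.sum}.ncard := by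
  induction ms using Multiset.induction_on with
  | empty => simp
  | cons g s ih =>
      have hs : ∀ g' ∈ s, g' ∈ C ∧ g' ≠ 0 :=
        fun g' hg' => h g' (Multiset.mem_cons_of_mem hg')
      have hg : g ∈ C ∧ g ≠ 0 := h g (Multiset.mem_cons_self g s)
      set m := (g ::ₘ s).sum with hm
      have hsum : m = g + s.sum := Multiset.sum_cons g s
      have hle : O.le s.sum m := by rw [hsum, add_comm]; exact ad_le_self_add O s.sum g
      have hfin : {x | x ∈ C ∧ x ≠ 0 ∧ O.le x m}.Finite :=
        (O.finite_le m).subset (fun x hx => hx.2.2)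
      have hfin' : {x | x ∈ C ∧ x ≠ 0 ∧ O.le x s.sum}.Finite :=
        (O.finite_le s.sum).subset (fun x hx => hx.2.2)
      have hmem : m ∈ C := cone_sum_mem hC _ (fun g' hg' => (h g' hg').1)
      have hmne : m ≠ 0 := msum_ne_zero _ (by simp) (fun g' hg' => (h g' hg').2)
      have hnm : m ∉ {x | x ∈ C ∧ x ≠ 0 ∧ O.le x s.sum} := by
        rintro ⟨-, -, hle'⟩
        have heq : m = s.sum := O.le_antisymm _ _ hle' hle
        apply hg.2
        have heq2 : g + s.sum = s.sum := by rw [← hsum]; exact heq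
        funext i
        have := congrFun heq2 i
        simp only [Pi.add_apply, Pi.zero_apply] at this ⊢
        omega
      have hsub : insert m {x | x ∈ C ∧ x ≠ 0 ∧ O.le x s.sum} ⊆
          {x | x ∈ C ∧ x ≠ 0 ∧ O.le x m} := by
        rintro x (rfl | ⟨h1, h2, h3⟩)
        · exact ⟨hmem, hmne, O.le_refl m⟩
        · exact ⟨h1, h2, O.le_trans _ _ _ h3 hle⟩
      calc Multiset.card (g ::ₘ s) = Multiset.card s + 1 := by simp
        _ ≤ {x | x ∈ C ∧ x ≠ 0 ∧ O.le x s.sum}.ncard + 1 := by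
            exact Nat.add_le_add_right (ih hs) 1
        _ = (insert m {x | x ∈ C ∧ x ≠ 0 ∧ O.le x s.sum}).ncard :=
            (Set.ncard_insert_of_notMem hnm hfin').symm
        _ ≤ {x | x ∈ C ∧ x ≠ 0 ∧ O.le x m}.ncard := Set.ncard_le_ncard hsub hfin

lemma cone_rep {p : ℕ} (A : Finset (Fin p → ℕ)) :
    ∀ x ∈ {x : Fin p → ℕ | ∃ l : (Fin p → ℕ) → ℝ,
      (∀ a, 0 ≤ l a) ∧ ∀ i, (x i : ℝ) = ∑ a ∈ A, l a * (a i : ℝ)},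
    ∃ ms : Multiset (Fin p → ℕ),
      (∀ g ∈ ms, g ∈ {x : Fin p → ℕ | ∃ l : (Fin p → ℕ) → ℝ,
          (∀ a, 0 ≤ l a) ∧ ∀ i, (x i : ℝ) = ∑ a ∈ A, l a * (a i : ℝ)} ∧
        g ≠ 0 ∧ ∀ i, g i ≤ (∑ a ∈ A, a) i) ∧ ms.sum = x := by
  set C := {x : Fin p → ℕ | ∃ l : (Fin p → ℕ) → ℝ,
      (∀ a, 0 ≤ l a) ∧ ∀ i, (x i : ℝ) = ∑ a ∈ A, l a * (a i : ℝ)} with hCA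
  set σ := ∑ a ∈ A, a with hσdef
  have hσ : ∀ i, σ i = ∑ a ∈ A, a i := by
    intro i; rw [hσdef, Finset.sum_apply]
  suffices H : ∀ n : ℕ, ∀ x ∈ C, (∑ i, x i) = n →
      ∃ ms : Multiset (Fin p → ℕ),
        (∀ g ∈ ms, g ∈ C ∧ g ≠ 0 ∧ ∀ i, g i ≤ σ i) ∧ ms.sum = x by
    intro x hx; exact H (∑ i, x i) x hx rfl
  intro n
  induction n using Nat.strong_induction_on with
  | _ n IH =>
    intro x hx hn
    obtain ⟨l, hl, hle⟩ := hx
    by_cases hbig : ∃ a ∈ A, a ≠ 0 ∧ 1 < l a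
    · obtain ⟨a, haA, ha0, hla⟩ := hbig
      -- a ≤ x pointwise
      have hax : ∀ i, a i ≤ x i := by
        intro i
        have h1 : l a * (a i : ℝ) ≤ ∑ b ∈ A, l b * (b i : ℝ) :=
          Finset.single_le_sum (f := fun b => l b * (b i : ℝ))
            (fun b _ => mul_nonneg (hl b) (by positivity)) haA
        have h2 : (a i : ℝ) ≤ l a * (a i : ℝ) := by
          have hai : (0:ℝ) ≤ (a i : ℝ) := Nat.cast_nonneg _
          nlinarith [hla, hai]
        have := h2.trans (h1.trans_eq (hle i).symm)
        exact_mod_cast this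
      set y : Fin p → ℕ := x - a with hydef
      have hyi : ∀ i, y i = x i - a i := fun i => rfl
      have hyx : y + a = x := by
        funext i
        have := hax i
        simp only [Pi.add_apply, hyi]
        omega
      have hyC : y ∈ C := by
        refine ⟨Function.update l a (l a - 1), ?_, ?_⟩
        · intro b
          rcases eq_or_ne b a with rfl | hb
          · rw [Function.update_self]; linarith
          · rw [Function.update_of_ne hb]; exact hl b
        · intro i
          have key : ∀ b ∈ A, Function.update l a (l a - 1) b * (b i : ℝ)
              = l b * (b i : ℝ) - (if b = a then (a i : ℝ) else 0) := by
            intro b _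
            rcases eq_or_ne b a with rfl | hb
            · rw [Function.update_self]; simp; ring
            · rw [Function.update_of_ne hb]; simp [hb]
          rw [Finset.sum_congr rfl key, Finset.sum_sub_distrib,
            Finset.sum_ite_eq' A a (fun b => (a i : ℝ)), if_pos haA, ← hle i]
          have : (y i : ℝ) = (x i : ℝ) - (a i : ℝ) := by
            rw [hyi i]; push_cast [Nat.cast_sub (hax i)]; ring
          linarith [this]
      have hlt : (∑ i, y i) < n := by
        rw [← hn]
        have hj : ∃ j, a j ≠ 0 := by
          by_contra h; push_neg at h; exact ha0 (funext fun j => h j)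
        obtain ⟨j, hj⟩ := hj
        apply Finset.sum_lt_sum (fun i _ => by rw [hyi i]; omega)
        exact ⟨j, Finset.mem_univ j, by have := hax j; rw [hyi j]; omega⟩
      obtain ⟨ms', hms', hsum'⟩ := IH (∑ i, y i) hlt y hyC rfl
      have haG : a ∈ C ∧ a ≠ 0 ∧ ∀ i, a i ≤ σ i := by
        refine ⟨?_, ha0, fun i => ?_⟩
        · refine ⟨fun b => if b = a then 1 else 0, fun b => by positivity, fun i => ?_⟩
          have key2 : ∑ b ∈ A, (if b = a then (1:ℝ) else 0) * (b i : ℝ)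
              = ∑ b ∈ A, (if b = a then (a i : ℝ) else 0) :=
            Finset.sum_congr rfl (fun b _ => by
              rcases eq_or_ne b a with rfl | hb
              · simp
              · simp [hb])
          rw [key2, Finset.sum_ite_eq' A a (fun b => (a i : ℝ)), if_pos haA]
        · rw [hσ i]
          exact Finset.single_le_sum (f := fun b => b i) (fun b _ => Nat.zero_le _) haA
      refine ⟨a ::ₘ ms', ?_, ?_⟩
      · intro g hg
        rcases Multiset.mem_cons.mp hg with rfl | hg'
        · exact haG
        · exact hms' g hg'
      · rw [Multiset.sum_cons, hsum', add_comm, hyx]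
    · push_neg at hbig
      have hxσ : ∀ i, x i ≤ σ i := by
        intro i
        have h1 : (x i : ℝ) ≤ ∑ a ∈ A, (a i : ℝ) := by
          rw [hle i]
          apply Finset.sum_le_sum
          intro b hb
          rcases eq_or_ne b 0 with rfl | hb0
          · simp
          · have hb1 := hbig b hb hb0
            have hbi : (0:ℝ) ≤ (b i : ℝ) := Nat.cast_nonneg _
            nlinarith [hb1, hbi, hl b]
        have h2 : ((σ i : ℕ) : ℝ) = ∑ a ∈ A, (a i : ℝ) := by
          rw [hσ i]; push_cast; ring
        rw [← h2] at h1
        exact_mod_cast h1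
      rcases eq_or_ne x 0 with rfl | hx0
      · exact ⟨0, by simp, rfl⟩
      · exact ⟨{x}, fun g hg => by
          rw [Multiset.mem_singleton] at hg
          subst hg
          exact ⟨⟨l, hl, hle⟩, hx0, hxσ⟩, Multiset.sum_singleton x⟩


lemma box_finite {p : ℕ} (N : Fin p → ℕ) : {x : Fin p → ℕ | ∀ i, x i ≤ N i}.Finite := by
  have : {x : Fin p → ℕ | ∀ i, x i ≤ N i} = Set.Iic N := by
    ext x; simp [Set.mem_Iic, Pi.le_def]
  rw [this]; exact Set.finite_Iic N

lemma ad_exists_min {p : ℕ} (O : AdmissibleOrder p) (s : Set (Fin p → ℕ))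
    (hfin : s.Finite) (hne : s.Nonempty) : ∃ w ∈ s, ∀ x ∈ s, O.le w x := by
  refine Set.Finite.induction_on
    (motive := fun s _ => s.Nonempty → ∃ w ∈ s, ∀ x ∈ s, O.le w x) s hfin (by simp)
    (fun {a s'} ha hsfin ih _ => ?_) hne
  rcases s'.eq_empty_or_nonempty with rfl | hne'
  · exact ⟨a, Set.mem_insert a ∅, fun x hx => by
      rcases hx with rfl | hx
      · exact O.le_refl x
      · simp at hx⟩
  · obtain ⟨w, hw, hwmin⟩ := ih hne'
    rcases O.le_total a w with h | h
    · exact ⟨a, Set.mem_insert a s', fun x hx => by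
        rcases hx with rfl | hx
        · exact O.le_refl x
        · exact O.le_trans _ _ _ h (hwmin x hx)⟩
    · exact ⟨w, Set.mem_insert_of_mem a hw, fun x hx => by
        rcases hx with rfl | hx
        · exact h
        · exact hwmin x hx⟩

/-- For any ordinary C-semigroup S (with C ≠ {0}), g(S) < e(S). -/
theorem statement11 (p : ℕ) (hp : 0 < p) (C : Set (Fin p → ℕ)) (hC : IsIntegerCone p C)
    (hC0 : C ≠ {0}) (O : AdmissibleOrder p) (c : Fin p → ℕ) (hc : c ∈ C) :
    genusOf C (ordinarySemigroup O C c) < (msg (ordinarySemigroup O C c)).ncard := by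
  classical
  obtain ⟨A, hCA⟩ := id hC
  set S := ordinarySemigroup O C c with hSdef
  have hmemS : ∀ x, x ∈ S ↔ x = 0 ∨ (x ∈ C ∧ O.le c x) := by
    intro x; simp [hSdef, ordinarySemigroup, Set.mem_insert_iff]
  have h0S : (0 : Fin p → ℕ) ∈ S := (hmemS 0).mpr (Or.inl rfl)
  set σ := ∑ a ∈ A, a with hσdef
  set Fc := {x | x ∈ C ∧ x ≠ 0 ∧ O.le x c} with hFcdef
  have hFcfin : Fc.Finite := (O.finite_le c).subset fun x hx => hx.2.2
  set N := Fc.ncard with hNdef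
  set K := 2 * N + 2 with hKdef
  have key : ∀ md : Multiset (Fin p → ℕ), (∀ g ∈ md, g ∈ C ∧ g ≠ 0) →
      N + 1 ≤ Multiset.card md → O.le c md.sum := by
    intro md hmd hcard
    rcases O.le_total c md.sum with h | h
    · exact h
    · exfalso
      have h1 := chain_bound hC O md hmd
      have hsub : {x | x ∈ C ∧ x ≠ 0 ∧ O.le x md.sum} ⊆ Fc := fun x hx =>
        ⟨hx.1, hx.2.1, O.le_trans _ _ _ hx.2.2 h⟩
      have h2 := Set.ncard_le_ncard hsub hFcfin
      omega
  have hmsgsub : msg S ⊆ {x | ∀ i, x i ≤ K * σ i} := by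
    intro m hm
    obtain ⟨⟨hmS, hm0'⟩, hmnot⟩ := hm
    have hm0 : m ≠ 0 := by simpa using hm0'
    have hmC : m ∈ C := by
      rcases (hmemS m).mp hmS with rfl | h
      · exact absurd rfl hm0
      · exact h.1
    obtain ⟨ms, hmsP, hmssum⟩ := cone_rep A m (hCA ▸ hmC)
    have hmsC : ∀ g ∈ ms, g ∈ C ∧ g ≠ 0 := fun g hg =>
      ⟨hCA ▸ (hmsP g hg).1, (hmsP g hg).2.1⟩
    by_cases hcard : Multiset.card ms ≤ K
    · intro i
      have hb := msum_bound ms σ (fun g hg => (hmsP g hg).2.2) i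
      have h2 : Multiset.card ms * σ i ≤ K * σ i := Nat.mul_le_mul_right _ hcard
      rw [hmssum] at hb
      omega
    · exfalso
      push_neg at hcard
      set t := ms.toList with htdef
      have htlen : t.length = Multiset.card ms := Multiset.length_toList ms
      set la : List (Fin p → ℕ) := t.take (N + 1) with hladef
      set lb : List (Fin p → ℕ) := t.drop (N + 1) with hlbdef
      set ma : Multiset (Fin p → ℕ) := ↑la with hmadef
      set mb : Multiset (Fin p → ℕ) := ↑lb with hmbdef
      have hsplit : ma + mb = ms := by
        rw [hmadef, hmbdef, hladef, hlbdef, Multiset.coe_add, List.take_append_drop,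
          htdef, Multiset.coe_toList]
      have hmamem : ∀ g ∈ ma, g ∈ C ∧ g ≠ 0 := by
        intro g hg
        have h1 : g ∈ la := Multiset.mem_coe.mp hg
        have h2 : g ∈ ms.toList := List.take_subset _ _ h1
        exact hmsC g ((Multiset.mem_toList).mp h2)
      have hmbmem : ∀ g ∈ mb, g ∈ C ∧ g ≠ 0 := by
        intro g hg
        have h1 : g ∈ lb := Multiset.mem_coe.mp hg
        have h2 : g ∈ ms.toList := List.drop_subset _ _ h1
        exact hmsC g ((Multiset.mem_toList).mp h2)
      have hmacard : Multiset.card ma = N + 1 := by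
        rw [hmadef, hladef]
        simp only [Multiset.coe_card, List.length_take]
        omega
      have hmbcard : N + 1 ≤ Multiset.card mb := by
        rw [hmbdef, hlbdef]
        simp only [Multiset.coe_card, List.length_drop]
        omega
      have hsum : ma.sum + mb.sum = m := by
        rw [← Multiset.sum_add, hsplit, hmssum]
      have haS : ma.sum ∈ S := (hmemS _).mpr (Or.inr
        ⟨cone_sum_mem hC ma (fun g hg => (hmamem g hg).1), key ma hmamem (by omega)⟩)
      have hbS : mb.sum ∈ S := (hmemS _).mpr (Or.inr
        ⟨cone_sum_mem hC mb (fun g hg => (hmbmem g hg).1), key mb hmbmem hmbcard⟩)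
      have ha0 : ma.sum ≠ 0 := msum_ne_zero ma (by omega) (fun g hg => (hmamem g hg).2)
      have hb0 : mb.sum ≠ 0 := msum_ne_zero mb (by omega) (fun g hg => (hmbmem g hg).2)
      exact hmnot ⟨ma.sum, ⟨haS, by simpa using ha0⟩, mb.sum, ⟨hbS, by simpa using hb0⟩, hsum⟩
  have hmsgfin : (msg S).Finite := (box_finite (fun i => K * σ i)).subset hmsgsub
  have hgfin : (C \ S).Finite := by
    apply (O.finite_le c).subset
    intro x hx
    rcases O.le_total x c with h | h
    · exact h
    · exact absurd ((hmemS x).mpr (Or.inr ⟨hx.1, h⟩)) hx.2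
  rcases eq_or_ne c 0 with rfl | hc0
  · -- c = 0 : no gaps, msg nonempty
    have hempty : C \ S = ∅ := by
      ext x
      simp only [Set.mem_diff, Set.mem_empty_iff_false, iff_false, not_and, not_not]
      exact fun hx => (hmemS x).mpr (Or.inr ⟨hx, O.zero_le x⟩)
    have hgenus : genusOf C S = 0 := by rw [genusOf, hempty, Set.ncard_empty]
    rw [hgenus]
    obtain ⟨m, hmC, hm0⟩ : ∃ m ∈ C, m ≠ 0 := by
      by_contra h
      push_neg at h
      apply hC0
      ext x
      simp only [Set.mem_singleton_iff]
      exact ⟨fun hx => h x hx, fun hx => hx ▸ cone_zero_mem hC⟩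
    have hWfin : {x | x ∈ C ∧ x ≠ 0 ∧ O.le x m}.Finite :=
      (O.finite_le m).subset fun x hx => hx.2.2
    obtain ⟨w, hwW, hwmin⟩ := ad_exists_min O _ hWfin ⟨m, hmC, hm0, O.le_refl m⟩
    have hwmsg : w ∈ msg S := by
      refine ⟨⟨(hmemS w).mpr (Or.inr ⟨hwW.1, O.zero_le w⟩), by simpa using hwW.2.1⟩, ?_⟩
      rintro ⟨a, ⟨haS, ha0'⟩, b, ⟨hbS, hb0'⟩, hab⟩
      have ha0 : a ≠ 0 := by simpa using ha0'
      have hb0 : b ≠ 0 := by simpa using hb0'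
      have haC : a ∈ C := by
        rcases (hmemS a).mp haS with rfl | h
        · exact absurd rfl ha0
        · exact h.1
      have haw : O.le a w := by rw [← hab]; exact ad_le_self_add O a b
      have haW : a ∈ {x | x ∈ C ∧ x ≠ 0 ∧ O.le x m} :=
        ⟨haC, ha0, O.le_trans _ _ _ haw hwW.2.2⟩
      have hwa : w = a := O.le_antisymm _ _ (hwmin a haW) haw
      apply hb0
      funext i
      have := congrFun hab i
      rw [← hwa] at this
      simp only [Pi.add_apply, Pi.zero_apply] at this ⊢
      omega
    exact Set.ncard_pos hmsgfin |>.mpr ⟨w, hwmsg⟩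
  · -- c ≠ 0 : inject gaps + {c} into msg
    have hcS : c ∈ S := (hmemS c).mpr (Or.inr ⟨hc, O.le_refl c⟩)
    have hgapprop : ∀ x ∈ C \ S, x ∈ C ∧ x ≠ 0 ∧ ¬ O.le c x := by
      intro x hx
      refine ⟨hx.1, ?_, ?_⟩
      · rintro rfl; exact hx.2 h0S
      · intro h; exact hx.2 ((hmemS x).mpr (Or.inr ⟨hx.1, h⟩))
    have hTsub : insert c ((· + c) '' (C \ S)) ⊆ msg S := by
      rintro z (rfl | ⟨x, hx, rfl⟩)
      · refine ⟨⟨hcS, by simpa using hc0⟩, ?_⟩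
        rintro ⟨a, ⟨haS, ha0'⟩, b, ⟨hbS, hb0'⟩, hab⟩
        have ha0 : a ≠ 0 := by simpa using ha0'
        have hb0 : b ≠ 0 := by simpa using hb0'
        have hca : O.le z a := by
          rcases (hmemS a).mp haS with rfl | h
          · exact absurd rfl ha0
          · exact h.2
        have hcb : O.le z b := by
          rcases (hmemS b).mp hbS with rfl | h
          · exact absurd rfl hb0
          · exact h.2
        have h1 : O.le (z + z) (a + b) :=
          O.le_trans _ _ _ (O.add_right z a z hca) (ad_le_add_left O a hcb)
        rw [hab] at h1
        have h2 : O.le z (z + z) := ad_le_self_add O z z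
        have h3 : z + z = z := O.le_antisymm _ _ h1 h2
        apply hc0
        funext i
        have := congrFun h3 i
        simp only [Pi.add_apply, Pi.zero_apply] at this ⊢
        omega
      · obtain ⟨hxC, hx0, hxnc⟩ := hgapprop x hx
        have hxcS : x + c ∈ S := (hmemS _).mpr (Or.inr ⟨cone_add_mem hC hxC hc, by
          have := O.add_right 0 x c (O.zero_le x)
          simpa using this⟩)
        refine ⟨⟨hxcS, ?_⟩, ?_⟩
        · simp only [Set.mem_singleton_iff]
          intro h0
          apply hc0
          funext i
          have := congrFun h0 i
          simp only [Pi.add_apply, Pi.zero_apply] at this ⊢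
          omega
        · rintro ⟨a, ⟨haS, ha0'⟩, b, ⟨hbS, hb0'⟩, hab⟩
          have ha0 : a ≠ 0 := by simpa using ha0'
          have hb0 : b ≠ 0 := by simpa using hb0'
          have hca : O.le c a := by
            rcases (hmemS a).mp haS with rfl | h
            · exact absurd rfl ha0
            · exact h.2
          have hcb : O.le c b := by
            rcases (hmemS b).mp hbS with rfl | h
            · exact absurd rfl hb0
            · exact h.2
          have h1 : O.le (c + c) (a + b) :=
            O.le_trans _ _ _ (O.add_right c a c hca) (ad_le_add_left O a hcb)
          rw [hab] at h1
          exact hxnc (ad_cancel O h1)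
    have hinj : Function.Injective (· + c) := fun x y h => by
      funext i
      have := congrFun h i
      simp only [Pi.add_apply] at this
      omega
    have himfin : ((· + c) '' (C \ S)).Finite := hgfin.image _
    have hcnot : c ∉ (· + c) '' (C \ S) := by
      rintro ⟨x, hx, hxe⟩
      have hx0 : x = 0 := by
        funext i
        have := congrFun hxe i
        simp only [Pi.add_apply, Pi.zero_apply] at this ⊢
        omega
      exact hx.2 (hx0 ▸ h0S)
    have e1 : ((· + c) '' (C \ S)).ncard = (C \ S).ncard :=
      Set.ncard_image_of_injective _ hinj
    have e2 : (insert c ((· + c) '' (C \ S))).ncard = (C \ S).ncard + 1 := by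
      rw [Set.ncard_insert_of_notMem hcnot himfin, e1]
    have e3 : (insert c ((· + c) '' (C \ S))).ncard ≤ (msg S).ncard :=
      Set.ncard_le_ncard hTsub hmsgfin
    rw [genusOf]
    omega
end

section
/- Let C ⊆ ℕ^p be an integer cone and let S ⊆ C be an additive submonoid. If S is saturated, then S is arf. -/
open Set BigOperators

theorem IsIntegerCone.add_mem {p : ℕ} {C : Set (Fin p → ℕ)} (hC : IsIntegerCone p C)
    {u v : Fin p → ℕ} (hu : u ∈ C) (hv : v ∈ C) : u + v ∈ C := by
  obtain ⟨A, rfl⟩ := hC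
  obtain ⟨l, hl, hul⟩ := hu
  obtain ⟨m, hm, hvm⟩ := hv
  refine ⟨l + m, fun a => add_nonneg (hl a) (hm a), fun i => ?_⟩
  simp only [Pi.add_apply, Nat.cast_add, hul i, hvm i, add_mul, Finset.sum_add_distrib]

theorem leC_trans {p : ℕ} {C : Set (Fin p → ℕ)} (hC : ∀ u ∈ C, ∀ v ∈ C, u + v ∈ C)
    {x y z : Fin p → ℕ} (hxy : leC C x y) (hyz : leC C y z) : leC C x z := by
  obtain ⟨d, hd, rfl⟩ := hxy
  obtain ⟨e, he, rfl⟩ := hyz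
  exact ⟨d + e, hC d hd e he, (add_assoc x d e).symm⟩

theorem SaturatedSemigroup.add_mem_of_add_eq {p : ℕ} {C S : Set (Fin p → ℕ)}
    (hsat : SaturatedSemigroup C S) {s a b d : Fin p → ℕ} (hs : s ∈ S) (ha : a ∈ S)
    (hb : b ∈ S) (has : leC C a s) (hbs : leC C b s) (hd : d ∈ C) (hbd : b + d = a) :
    s + d ∈ S := by
  refine hsat 2 s ![a, b] ![1, -1] hs (Fin.forall_fin_two.2 ⟨ha, hb⟩)
    (Fin.forall_fin_two.2 ⟨has, hbs⟩) d hd fun j => ?_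
  have hj : b j + d j = a j := congrFun hbd j
  simp only [Fin.sum_univ_two, Matrix.cons_val_zero, Matrix.cons_val_one]
  omega

theorem statement12_general (p : ℕ) (C : Set (Fin p → ℕ)) (hC : IsIntegerCone p C)
    (S : Set (Fin p → ℕ)) (hsat : SaturatedSemigroup C S) :
    ArfSemigroup C S := by
  intro x hx y hy z hz hzy hyx w hw
  obtain ⟨d, hd, hzd⟩ := hzy
  have hzx : leC C z x := leC_trans (fun _ hu _ hv => hC.add_mem hu hv) ⟨d, hd, hzd⟩ hyx
  have hw_eq : w = x + d := by
    apply add_right_cancel (b := z)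
    rw [hw, ← hzd, add_comm z d, add_assoc]
  exact hw_eq ▸ hsat.add_mem_of_add_eq hx hy hz hyx hzx hd hzd

/-- Every saturated submonoid of an integer cone is arf. -/
theorem statement12 (p : ℕ) (hp : 0 < p) (C : Set (Fin p → ℕ)) (hC : IsIntegerCone p C)
    (S : Set (Fin p → ℕ)) (hSC : S ⊆ C) (h0 : 0 ∈ S)
    (hadd : ∀ x ∈ S, ∀ y ∈ S, x + y ∈ S)
    (hsat : SaturatedSemigroup C S) :
    ArfSemigroup C S :=
  statement12_general p C hC S hsat
end

section
/- Fix the graded lexicographic order ⪯ on ℕ². Let c = (0, c₂) with c₂ ≥ 1 and let S_c = {0} ∪ {x ∈ ℕ² : c ⪯ x} be the ordinary ℕ²-semigroup with conductor c. Then msg(S_c) = {(x₁, x₂) ∈ ℕ² : c₂ ≤ x₁ + x₂ ≤ 2c₂ − 1}, and consequently e(S_c) = c₂(3c₂ + 1)/2. -/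
open Set

/-- The graded lexicographic order on ℕ². -/
def glexLe (x y : ℕ × ℕ) : Prop :=
  x.1 + x.2 < y.1 + y.2 ∨ (x.1 + x.2 = y.1 + y.2 ∧ x.1 ≤ y.1)

/-- The strict graded lexicographic order on ℕ². -/
def glexLt (x y : ℕ × ℕ) : Prop :=
  x.1 + x.2 < y.1 + y.2 ∨ (x.1 + x.2 = y.1 + y.2 ∧ x.1 < y.1)

/-- The minimal generating set of an ℕ²-semigroup. -/
def msg2 (S : Set (ℕ × ℕ)) : Set (ℕ × ℕ) :=
  (S \ {0}) \ {x | ∃ a ∈ S \ {0}, ∃ b ∈ S \ {0}, a + b = x}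

/-- The ordinary ℕ²-semigroup S_c = {0} ∪ {x : c ⪯ x} for the graded lexicographic order. -/
def ord2 (c : ℕ × ℕ) : Set (ℕ × ℕ) :=
  insert 0 {x | glexLe c x}

/-- The mult-embedded ℕ²-semigroup {0, m, 2m, …, (k-1)m} ∪ {x : km ⪯ x}. -/
def multEmb (k : ℕ) (m : ℕ × ℕ) : Set (ℕ × ℕ) :=
  {x | ∃ i < k, x = i • m} ∪ {x | glexLe (k • m) x}

/-- ν(S) = #{x ∈ S : x ≤ h componentwise for some gap h}. -/
noncomputable def nu2 (S : Set (ℕ × ℕ)) : ℕ :=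
  {x | x ∈ S ∧ ∃ h, h ∉ S ∧ x.1 ≤ h.1 ∧ x.2 ≤ h.2}.ncard

/-- γ(S) = #{x ∈ ℕ² : x ≤ h componentwise for some gap h}. -/
noncomputable def gamma2 (S : Set (ℕ × ℕ)) : ℕ :=
  {x : ℕ × ℕ | ∃ h, h ∉ S ∧ x.1 ≤ h.1 ∧ x.2 ≤ h.2}.ncard

/-- n(S) = #{s ∈ S : s ≺ f}, the number of small elements relative to f = Fb(S). -/
noncomputable def smallCount2 (S : Set (ℕ × ℕ)) (f : ℕ × ℕ) : ℕ :=
  {s | s ∈ S ∧ glexLt s f}.ncard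

/-- N(f) = #{x ∈ ℕ² \ {0} : x ⪯ f}. -/
noncomputable def NNum2 (f : ℕ × ℕ) : ℕ :=
  {x : ℕ × ℕ | x ≠ 0 ∧ glexLe x f}.ncard

/-- Minimal generating set and embedding dimension of the ordinary ℕ²-semigroup with
conductor c = (0, c₂), under the graded lexicographic order. -/
theorem statement15 (c2 : ℕ) (hc2 : 1 ≤ c2) :
    msg2 (ord2 (0, c2)) = {x : ℕ × ℕ | c2 ≤ x.1 + x.2 ∧ x.1 + x.2 ≤ 2 * c2 - 1} ∧
    (msg2 (ord2 (0, c2))).ncard = c2 * (3 * c2 + 1) / 2 := by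
  classical
  have hS : ∀ x : ℕ × ℕ, x ∈ ord2 (0, c2) ↔ x = 0 ∨ c2 ≤ x.1 + x.2 := by
    intro x
    simp only [ord2, Set.mem_insert_iff, Set.mem_setOf_eq, glexLe]
    constructor
    · rintro (h | h | ⟨h, -⟩)
      · exact Or.inl h
      · exact Or.inr (by omega)
      · exact Or.inr (by omega)
    · rintro (h | h)
      · exact Or.inl h
      · rcases lt_or_eq_of_le h with h' | h'
        · exact Or.inr (Or.inl (by omega))
        · exact Or.inr (Or.inr ⟨by omega, Nat.zero_le _⟩)
  have hmsg : msg2 (ord2 (0, c2)) =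
      {x : ℕ × ℕ | c2 ≤ x.1 + x.2 ∧ x.1 + x.2 ≤ 2 * c2 - 1} := by
    ext x
    simp only [msg2, Set.mem_diff, Set.mem_singleton_iff, Set.mem_setOf_eq]
    constructor
    · rintro ⟨⟨hxS, hx0⟩, hnot⟩
      have h1 : c2 ≤ x.1 + x.2 := by
        rcases (hS x).1 hxS with h | h
        · exact absurd h hx0
        · exact h
      refine ⟨h1, ?_⟩
      by_contra hbig
      push_neg at hbig
      have hsum : 2 * c2 ≤ x.1 + x.2 := by omega
      apply hnot
      refine ⟨(min x.1 c2, c2 - min x.1 c2), ⟨(hS _).2 (Or.inr (by simp)), ?_⟩,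
        (x.1 - min x.1 c2, x.2 - (c2 - min x.1 c2)), ⟨(hS _).2 (Or.inr (by simp; omega)), ?_⟩, ?_⟩
      · simp [Prod.ext_iff]; omega
      · simp [Prod.ext_iff]; omega
      · simp [Prod.ext_iff, Prod.mk_add_mk]; omega
    · rintro ⟨h1, h2⟩
      refine ⟨⟨(hS x).2 (Or.inr h1), ?_⟩, ?_⟩
      · intro h; rw [h] at h1; simp at h1; omega
      · rintro ⟨a, ⟨haS, ha0⟩, b, ⟨hbS, hb0⟩, hab⟩
        have hA : c2 ≤ a.1 + a.2 := by
          rcases (hS a).1 haS with h | h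
          · exact absurd h ha0
          · exact h
        have hB : c2 ≤ b.1 + b.2 := by
          rcases (hS b).1 hbS with h | h
          · exact absurd h hb0
          · exact h
        have : a.1 + b.1 = x.1 ∧ a.2 + b.2 = x.2 := by
          rw [← hab]; exact ⟨rfl, rfl⟩
        omega
  refine ⟨hmsg, ?_⟩
  rw [hmsg]
  set T : Finset (ℕ × ℕ) :=
    (Finset.Icc c2 (2 * c2 - 1)).biUnion (fun s => Finset.HasAntidiagonal.antidiagonal s) with hT
  have hset : {x : ℕ × ℕ | c2 ≤ x.1 + x.2 ∧ x.1 + x.2 ≤ 2 * c2 - 1} = ↑T := by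
    ext x
    simp only [hT, Finset.coe_biUnion, Finset.mem_coe, Finset.mem_biUnion, Finset.mem_Icc,
      Finset.HasAntidiagonal.mem_antidiagonal, Set.mem_setOf_eq, Set.mem_iUnion]
    constructor
    · rintro ⟨h1, h2⟩; exact ⟨x.1 + x.2, ⟨h1, h2⟩, rfl⟩
    · rintro ⟨s, ⟨h1, h2⟩, h3⟩; omega
  rw [hset, Set.ncard_coe_finset]
  have hTC : T.card = ∑ s ∈ Finset.Icc c2 (2 * c2 - 1), (s + 1) := by
    rw [Finset.card_biUnion]
    · exact Finset.sum_congr rfl (fun s _ => Finset.Nat.card_antidiagonal s)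
    · intro s _ t _ hst
      rw [Function.onFun, Finset.disjoint_left]
      intro x hx hx'
      rw [Finset.HasAntidiagonal.mem_antidiagonal] at hx hx'
      exact hst (hx ▸ hx')
  have G : ∀ n : ℕ, 2 * ∑ i ∈ Finset.range n, (i + 1) = n * (n + 1) := by
    intro n
    induction n with
    | zero => simp
    | succ k ih =>
      rw [Finset.sum_range_succ, Nat.mul_add, ih]; ring
  have hIcc : Finset.Icc c2 (2 * c2 - 1) = Finset.Ico c2 (2 * c2) := by
    rw [← Finset.Ico_add_one_right_eq_Icc]
    congr 1
    omega
  have hsplit : (∑ i ∈ Finset.range c2, (i + 1)) +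
      (∑ i ∈ Finset.Ico c2 (2 * c2), (i + 1)) = ∑ i ∈ Finset.range (2 * c2), (i + 1) := by
    rw [Finset.range_eq_Ico, Finset.range_eq_Ico]
    exact Finset.sum_Ico_consecutive _ (Nat.zero_le _) (by omega : c2 ≤ 2 * c2)
  have h2B : 2 * ∑ i ∈ Finset.Ico c2 (2 * c2), (i + 1) = c2 * (3 * c2 + 1) := by
    have h1 := G (2 * c2)
    have h2 := G c2
    have e1 : 2 * c2 * (2 * c2 + 1) = 4 * (c2 * c2) + 2 * c2 := by ring
    have e2 : c2 * (c2 + 1) = c2 * c2 + c2 := by ring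
    have e3 : c2 * (3 * c2 + 1) = 3 * (c2 * c2) + c2 := by ring
    omega
  rw [hTC, hIcc, ← h2B]
  omega
end

section
/- Fix the graded lexicographic order ⪯ on ℕ². Let c = (c₁, c₂) ∈ ℕ² with c₁ ≥ 1, write π(x) = x₁ + x₂, and let S_c = {0} ∪ {x ∈ ℕ² : c ⪯ x} be the ordinary ℕ²-semigroup with conductor c. Then msg(S_c) is the union of the four sets {x ∈ ℕ² : π(x) = π(c) and x₁ ≥ c₁}, {x ∈ ℕ² : π(c) + 1 ≤ π(x) ≤ 2π(c) − 1}, {x ∈ ℕ² : π(x) = 2π(c) and x₁ < 2c₁}, and {x ∈ ℕ² : π(x) = 2π(c) + 1 and x₁ < c₁}; consequently e(S_c) = (3π(c)² + π(c) + 4c₁)/2. -/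
open Set

lemma gauss2 (m : ℕ) : 2 * ∑ d ∈ Finset.range m, (d + 1) = m * (m + 1) := by
  induction m with
  | zero => simp
  | succ k ih => rw [Finset.sum_range_succ, Nat.mul_add, ih]; ring

lemma card_U (c1 c2 : ℕ) (hc1 : 1 ≤ c1) :
    ({x : ℕ × ℕ | x.1 + x.2 = c1 + c2 ∧ c1 ≤ x.1} ∪
        {x : ℕ × ℕ | c1 + c2 + 1 ≤ x.1 + x.2 ∧ x.1 + x.2 ≤ 2 * (c1 + c2) - 1} ∪
        {x : ℕ × ℕ | x.1 + x.2 = 2 * (c1 + c2) ∧ x.1 < 2 * c1} ∪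
        {x : ℕ × ℕ | x.1 + x.2 = 2 * (c1 + c2) + 1 ∧ x.1 < c1}).ncard
      = (3 * (c1 + c2) ^ 2 + (c1 + c2) + 4 * c1) / 2 := by
  set n := c1 + c2 with hn
  have hcn : c1 ≤ n := by omega
  have hn1 : 1 ≤ n := by omega
  have hinj : ∀ d : ℕ, Function.Injective (fun i => ((i, d - i) : ℕ × ℕ)) :=
    fun d a b h => congrArg Prod.fst h
  have hline : ∀ (d : ℕ) (s : Finset ℕ), (∀ i ∈ s, i ≤ d) → ∀ x : ℕ × ℕ,
      (x ∈ s.image (fun i => ((i, d - i) : ℕ × ℕ)) ↔ x.1 ∈ s ∧ x.1 + x.2 = d) := by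
    intro d s hs x
    simp only [Finset.mem_image]
    constructor
    · rintro ⟨i, hi, rfl⟩
      exact ⟨hi, by have := hs i hi; dsimp; omega⟩
    · rintro ⟨h1, h2⟩
      refine ⟨x.1, h1, ?_⟩
      rw [Prod.ext_iff]
      refine ⟨rfl, ?_⟩
      dsimp; omega
  set P1 : Finset (ℕ × ℕ) := (Finset.Ico c1 (n+1)).image (fun i => (i, n - i)) with hP1
  set P2 : Finset (ℕ × ℕ) := (Finset.Ico (n+1) (2*n)).biUnion
      (fun d => (Finset.range (d+1)).image (fun i => (i, d - i))) with hP2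
  set P3 : Finset (ℕ × ℕ) := (Finset.range (2*c1)).image (fun i => (i, 2*n - i)) with hP3
  set P4 : Finset (ℕ × ℕ) := (Finset.range c1).image (fun i => (i, 2*n+1 - i)) with hP4
  have hm1 : ∀ x : ℕ × ℕ, x ∈ P1 ↔ (c1 ≤ x.1 ∧ x.1 < n+1) ∧ x.1 + x.2 = n := by
    intro x; rw [hP1, hline n _ (by intro i hi; simp [Finset.mem_Ico] at hi; omega)]
    simp [Finset.mem_Ico]
  have hm2 : ∀ x : ℕ × ℕ, x ∈ P2 ↔ n+1 ≤ x.1 + x.2 ∧ x.1 + x.2 < 2*n := by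
    intro x
    rw [hP2]
    simp only [Finset.mem_biUnion, Finset.mem_Ico]
    constructor
    · rintro ⟨d, hd, hx⟩
      rw [hline d _ (by intro i hi; simp [Finset.mem_range] at hi; omega)] at hx
      omega
    · rintro ⟨h1, h2⟩
      refine ⟨x.1 + x.2, by omega, ?_⟩
      rw [hline _ _ (by intro i hi; simp [Finset.mem_range] at hi; omega)]
      simp [Finset.mem_range]
  have hm3 : ∀ x : ℕ × ℕ, x ∈ P3 ↔ x.1 < 2*c1 ∧ x.1 + x.2 = 2*n := by
    intro x; rw [hP3, hline (2*n) _ (by intro i hi; simp [Finset.mem_range] at hi; omega)]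
    simp [Finset.mem_range]
  have hm4 : ∀ x : ℕ × ℕ, x ∈ P4 ↔ x.1 < c1 ∧ x.1 + x.2 = 2*n+1 := by
    intro x; rw [hP4, hline (2*n+1) _ (by intro i hi; simp [Finset.mem_range] at hi; omega)]
    simp [Finset.mem_range]
  have hUT : ({x : ℕ × ℕ | x.1 + x.2 = n ∧ c1 ≤ x.1} ∪
        {x : ℕ × ℕ | n + 1 ≤ x.1 + x.2 ∧ x.1 + x.2 ≤ 2 * n - 1} ∪
        {x : ℕ × ℕ | x.1 + x.2 = 2 * n ∧ x.1 < 2 * c1} ∪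
        {x : ℕ × ℕ | x.1 + x.2 = 2 * n + 1 ∧ x.1 < c1}) = ↑(P1 ∪ P2 ∪ P3 ∪ P4) := by
    ext x
    simp only [Set.mem_union, Set.mem_setOf_eq, Finset.coe_union, Finset.mem_coe,
      Finset.mem_union, hm1 x, hm2 x, hm3 x, hm4 x]
    omega
  rw [hUT, Set.ncard_coe_finset]
  have hd12 : Disjoint P1 P2 := by
    rw [Finset.disjoint_left]; intro x hx hx'
    rw [hm1 x] at hx; rw [hm2 x] at hx'; omega
  have hd123 : Disjoint (P1 ∪ P2) P3 := by
    rw [Finset.disjoint_left]; intro x hx hx'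
    rw [Finset.mem_union, hm1 x, hm2 x] at hx; rw [hm3 x] at hx'; omega
  have hd1234 : Disjoint (P1 ∪ P2 ∪ P3) P4 := by
    rw [Finset.disjoint_left]; intro x hx hx'
    rw [Finset.mem_union, Finset.mem_union, hm1 x, hm2 x, hm3 x] at hx
    rw [hm4 x] at hx'; omega
  rw [Finset.card_union_of_disjoint hd1234, Finset.card_union_of_disjoint hd123,
    Finset.card_union_of_disjoint hd12]
  have hc1' : P1.card = n + 1 - c1 := by
    rw [hP1, Finset.card_image_of_injective _ (hinj n), Nat.card_Ico]
  have hc3 : P3.card = 2 * c1 := by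
    rw [hP3, Finset.card_image_of_injective _ (hinj (2*n)), Finset.card_range]
  have hc4 : P4.card = c1 := by
    rw [hP4, Finset.card_image_of_injective _ (hinj (2*n+1)), Finset.card_range]
  have hc2' : P2.card = ∑ d ∈ Finset.Ico (n+1) (2*n), (d+1) := by
    rw [hP2, Finset.card_biUnion]
    · apply Finset.sum_congr rfl
      intro d _
      rw [Finset.card_image_of_injective _ (hinj d), Finset.card_range]
    · intro d hd d' hd' hne
      simp only [Function.onFun]; rw [Finset.disjoint_left]
      intro x hx hx'
      rw [hline d _ (by intro i hi; simp [Finset.mem_range] at hi; omega)] at hx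
      rw [hline d' _ (by intro i hi; simp [Finset.mem_range] at hi; omega)] at hx'
      omega
  rw [hc1', hc2', hc3, hc4]
  have hsplit : (∑ d ∈ Finset.range (n+1), (d+1)) + (∑ d ∈ Finset.Ico (n+1) (2*n), (d+1))
      = ∑ d ∈ Finset.range (2*n), (d+1) := by
    rw [Finset.range_eq_Ico, Finset.range_eq_Ico]
    exact Finset.sum_Ico_consecutive (fun d : ℕ => d + 1) (m := 0) (n := n+1) (k := 2*n) (by omega) (by omega)
  have g1 := gauss2 (2*n)
  have g2 := gauss2 (n+1)
  have e1 : (2*n) * (2*n+1) = 4 * n^2 + 2*n := by ring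
  have e2 : (n+1) * (n+1+1) = n^2 + 3*n + 2 := by ring
  rw [e1] at g1
  rw [e2] at g2
  obtain ⟨k, hk⟩ : ∃ k, n^2 = k := ⟨_, rfl⟩
  rw [hk] at g1 g2 ⊢
  omega

lemma mem_ord2 (c x : ℕ × ℕ) : (x ∈ ord2 c ∧ x ∉ ({0} : Set (ℕ × ℕ))) ↔
    ((x.1 + x.2 > c.1 + c.2 ∨ (x.1 + x.2 = c.1 + c.2 ∧ c.1 ≤ x.1)) ∧ ¬(x.1 = 0 ∧ x.2 = 0)) := by
  simp only [ord2, glexLe, Set.mem_insert_iff, Set.mem_setOf_eq, Set.mem_singleton_iff,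
    Prod.ext_iff, Prod.fst_zero, Prod.snd_zero, not_and]
  omega

lemma msg_ord_eq (c1 c2 : ℕ) (hc1 : 1 ≤ c1) :
    msg2 (ord2 (c1, c2)) =
      ({x : ℕ × ℕ | x.1 + x.2 = c1 + c2 ∧ c1 ≤ x.1} ∪
        {x : ℕ × ℕ | c1 + c2 + 1 ≤ x.1 + x.2 ∧ x.1 + x.2 ≤ 2 * (c1 + c2) - 1} ∪
        {x : ℕ × ℕ | x.1 + x.2 = 2 * (c1 + c2) ∧ x.1 < 2 * c1} ∪
        {x : ℕ × ℕ | x.1 + x.2 = 2 * (c1 + c2) + 1 ∧ x.1 < c1}) := by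
  set n := c1 + c2 with hn
  have hcn : c1 ≤ n := by omega
  ext ⟨x1, x2⟩
  simp only [msg2, Set.mem_diff, Set.mem_setOf_eq, Set.mem_union, mem_ord2]
  constructor
  · rintro ⟨⟨hS, hx0⟩, hnot⟩
    by_contra hU
    try dsimp only at hS hx0
    -- remaining cases
    have hcase : (x1 + x2 = 2*n ∧ 2*c1 ≤ x1) ∨ (x1 + x2 = 2*n+1 ∧ c1 ≤ x1) ∨ 2*n+2 ≤ x1 + x2 := by
      omega
    apply hnot
    rcases hcase with ⟨hd, hx⟩ | ⟨hd, hx⟩ | hd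
    · refine ⟨(max c1 (x1 - n), n - max c1 (x1 - n)), ?_, (x1 - max c1 (x1 - n), x2 - (n - max c1 (x1 - n))), ?_, ?_⟩
      · try dsimp only; omega
      · try dsimp only; omega
      · simp only [Prod.mk_add_mk, Prod.mk.injEq]; omega
    · refine ⟨(max c1 (x1 - n - 1), n - max c1 (x1 - n - 1)), ?_, (x1 - max c1 (x1 - n - 1), x2 - (n - max c1 (x1 - n - 1))), ?_, ?_⟩
      · try dsimp only; omega
      · try dsimp only; omega
      · simp only [Prod.mk_add_mk, Prod.mk.injEq]; omega
    · refine ⟨(min x1 (n+1), n + 1 - min x1 (n+1)), ?_, (x1 - min x1 (n+1), x2 - (n + 1 - min x1 (n+1))), ?_, ?_⟩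
      · try dsimp only; omega
      · try dsimp only; omega
      · simp only [Prod.mk_add_mk, Prod.mk.injEq]; omega
  · intro hU
    refine ⟨⟨?_, ?_⟩, ?_⟩
    · (try dsimp only at hU ⊢); omega
    · (try dsimp only at hU ⊢); omega
    · rintro ⟨⟨a1, a2⟩, ha, ⟨b1, b2⟩, hb, hab⟩
      simp only [Prod.mk_add_mk, Prod.mk.injEq] at hab
      try dsimp only at ha hb hU
      omega

/-- Minimal generating set and embedding dimension of the ordinary ℕ²-semigroup with
conductor c = (c₁, c₂), c₁ ≥ 1, under the graded lexicographic order. -/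
theorem statement16 (c : ℕ × ℕ) (hc1 : 1 ≤ c.1) :
    msg2 (ord2 c) =
      ({x : ℕ × ℕ | x.1 + x.2 = c.1 + c.2 ∧ c.1 ≤ x.1} ∪
        {x : ℕ × ℕ | c.1 + c.2 + 1 ≤ x.1 + x.2 ∧ x.1 + x.2 ≤ 2 * (c.1 + c.2) - 1} ∪
        {x : ℕ × ℕ | x.1 + x.2 = 2 * (c.1 + c.2) ∧ x.1 < 2 * c.1} ∪
        {x : ℕ × ℕ | x.1 + x.2 = 2 * (c.1 + c.2) + 1 ∧ x.1 < c.1}) ∧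
    (msg2 (ord2 c)).ncard = (3 * (c.1 + c.2) ^ 2 + (c.1 + c.2) + 4 * c.1) / 2 := by
  obtain ⟨c1, c2⟩ := c
  dsimp only at hc1 ⊢
  exact ⟨msg_ord_eq c1 c2 hc1, by rw [msg_ord_eq c1 c2 hc1]; exact card_U c1 c2 hc1⟩
end

section
/- Fix the graded lexicographic order ⪯ on ℕ². Every ordinary ℕ²-semigroup S_c = {0} ∪ {x ∈ ℕ² : c ⪯ x} (c ∈ ℕ²) with S_c ≠ ℕ² satisfies both the Generalized Wilf inequality ν(S_c)·e(S_c) ≥ 2·γ(S_c) and the Extended Wilf inequality n(S_c)·e(S_c) ≥ N(Fb(S_c)) + 1. -/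
open Set

section AuxStmt17

lemma pzero_iff {x : ℕ × ℕ} : x = 0 ↔ x.1 = 0 ∧ x.2 = 0 := by
  constructor
  · rintro rfl; exact ⟨rfl, rfl⟩
  · rintro ⟨h1, h2⟩; exact Prod.ext h1 h2

lemma padd_eq_iff {y z x : ℕ × ℕ} : y + z = x ↔ y.1 + z.1 = x.1 ∧ y.2 + z.2 = x.2 := by
  constructor
  · rintro rfl; exact ⟨rfl, rfl⟩
  · rintro ⟨h1, h2⟩; exact Prod.ext h1 h2

lemma mem_S {a b : ℕ} {x : ℕ × ℕ} :
    x ∈ ord2 (a, b) ↔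
      (x.1 = 0 ∧ x.2 = 0) ∨ a + b < x.1 + x.2 ∨ (a + b = x.1 + x.2 ∧ a ≤ x.1) := by
  simp [ord2, glexLe, pzero_iff]

lemma not_mem_S {a b : ℕ} {x : ℕ × ℕ} :
    x ∉ ord2 (a, b) ↔
      (x.1 ≠ 0 ∨ x.2 ≠ 0) ∧ (x.1 + x.2 < a + b ∨ (x.1 + x.2 = a + b ∧ x.1 < a)) := by
  rw [mem_S]; omega

lemma mem_msg2 {S : Set (ℕ × ℕ)} {x : ℕ × ℕ} :
    x ∈ msg2 S ↔ (x ∈ S ∧ x ≠ 0) ∧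
      ∀ y z : ℕ × ℕ, y ∈ S → y ≠ 0 → z ∈ S → z ≠ 0 → y + z ≠ x := by
  simp only [msg2, Set.mem_diff, Set.mem_singleton_iff, Set.mem_setOf_eq, not_exists]
  constructor
  · rintro ⟨⟨h1, h2⟩, h3⟩
    refine ⟨⟨h1, h2⟩, fun y z hy hy0 hz hz0 hyz => ?_⟩
    have := h3 y
    push_neg at this
    exact (this ⟨hy, hy0⟩ z ⟨hz, hz0⟩) hyz
  · rintro ⟨⟨h1, h2⟩, h3⟩
    refine ⟨⟨h1, h2⟩, fun y hy => ?_⟩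
    obtain ⟨⟨hy1, hy2⟩, z, ⟨hz1, hz2⟩, hyz⟩ := hy
    exact h3 y z hy1 hy2 hz1 hz2 hyz

def seg (s k : ℕ) : Finset (ℕ × ℕ) := (Finset.range k).image (fun t => (t, s - t))

lemma mem_seg {s k : ℕ} (hk : k ≤ s + 1) {x : ℕ × ℕ} :
    x ∈ seg s k ↔ x.1 < k ∧ x.1 + x.2 = s := by
  simp only [seg, Finset.mem_image, Finset.mem_range]
  constructor
  · rintro ⟨t, ht, rfl⟩; exact ⟨ht, by simp; omega⟩
  · rintro ⟨h1, h2⟩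
    exact ⟨x.1, h1, Prod.ext rfl (by simp; omega)⟩

lemma card_seg (s k : ℕ) : (seg s k).card = k := by
  rw [seg, Finset.card_image_of_injective _ (fun t u h => by simpa using congrArg Prod.fst h),
    Finset.card_range]

lemma seg_subset {s k k' : ℕ} (h : k ≤ k') : seg s k ⊆ seg s k' :=
  Finset.image_subset_image (Finset.range_subset_range.mpr h)

lemma seg_disj {s t ks kt : ℕ} (hs : ks ≤ s + 1) (ht : kt ≤ t + 1) (hst : s ≠ t) :
    Disjoint (seg s ks) (seg t kt) := by
  rw [Finset.disjoint_left]
  intro x hx hx'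
  rw [mem_seg hs] at hx
  rw [mem_seg ht] at hx'
  omega

lemma gauss (m : ℕ) : 2 * ∑ s ∈ Finset.range m, (s + 1) = m * (m + 1) := by
  induction m with
  | zero => simp
  | succ k ih => rw [Finset.sum_range_succ, Nat.mul_add, ih]; ring

def TriF (n : ℕ) : Finset (ℕ × ℕ) := (Finset.range n).biUnion (fun s => seg s (s + 1))

lemma mem_TriF {n : ℕ} {x : ℕ × ℕ} : x ∈ TriF n ↔ x.1 + x.2 < n := by
  simp only [TriF, Finset.mem_biUnion, Finset.mem_range]
  constructor
  · rintro ⟨s, hs, hx⟩; rw [mem_seg (le_refl _)] at hx; omega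
  · intro h; exact ⟨x.1 + x.2, h, (mem_seg (le_refl _)).mpr ⟨by omega, rfl⟩⟩

lemma card_TriF (n : ℕ) : 2 * (TriF n).card = n * (n + 1) := by
  rw [TriF, Finset.card_biUnion (fun s _ t _ hst => seg_disj (le_refl _) (le_refl _) hst)]
  rw [Finset.sum_congr rfl (fun s _ => card_seg s (s + 1)), gauss]

def gamF (a b : ℕ) : Finset (ℕ × ℕ) := TriF (a + b) ∪ seg (a + b) a

lemma mem_gamF {a b : ℕ} {x : ℕ × ℕ} :
    x ∈ gamF a b ↔ (x.1 + x.2 < a + b ∨ (x.1 + x.2 = a + b ∧ x.1 < a)) := by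
  simp only [gamF, Finset.mem_union, mem_TriF, mem_seg (show a ≤ (a + b) + 1 by omega)]
  omega

lemma card_gamF (a b : ℕ) : 2 * (gamF a b).card = (a + b) * (a + b + 1) + 2 * a := by
  have hdisj : Disjoint (TriF (a + b)) (seg (a + b) a) := by
    rw [Finset.disjoint_left]
    intro x hx hx'
    rw [mem_TriF] at hx
    rw [mem_seg (by omega)] at hx'
    omega
  rw [gamF, Finset.card_union_of_disjoint hdisj, Nat.mul_add, card_TriF, card_seg]

def genA (a b : ℕ) : Finset (ℕ × ℕ) := seg (a + b) (a + b + 1) \ seg (a + b) a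
def genB (a b : ℕ) : Finset (ℕ × ℕ) :=
  (Finset.Icc (a + b + 1) (2 * (a + b) - 1)).biUnion (fun s => seg s (s + 1))
def genC (a b : ℕ) : Finset (ℕ × ℕ) := seg (2 * (a + b)) (2 * a)
def genD (a b : ℕ) : Finset (ℕ × ℕ) := seg (2 * (a + b) + 1) a
def genF (a b : ℕ) : Finset (ℕ × ℕ) := genA a b ∪ genB a b ∪ genC a b ∪ genD a b

lemma mem_genA {a b : ℕ} {x : ℕ × ℕ} :
    x ∈ genA a b ↔ x.1 + x.2 = a + b ∧ a ≤ x.1 := by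
  simp only [genA, Finset.mem_sdiff, mem_seg (le_refl _), mem_seg (show a ≤ (a + b) + 1 by omega)]
  omega

lemma mem_genB {a b : ℕ} {x : ℕ × ℕ} :
    x ∈ genB a b ↔ a + b + 1 ≤ x.1 + x.2 ∧ x.1 + x.2 ≤ 2 * (a + b) - 1 := by
  simp only [genB, Finset.mem_biUnion, Finset.mem_Icc]
  constructor
  · rintro ⟨s, ⟨h1, h2⟩, hx⟩; rw [mem_seg (le_refl _)] at hx; omega
  · rintro ⟨h1, h2⟩; exact ⟨x.1 + x.2, ⟨h1, h2⟩, (mem_seg (le_refl _)).mpr ⟨by omega, rfl⟩⟩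

lemma mem_genC {a b : ℕ} {x : ℕ × ℕ} :
    x ∈ genC a b ↔ x.1 < 2 * a ∧ x.1 + x.2 = 2 * (a + b) := mem_seg (by omega)

lemma mem_genD {a b : ℕ} {x : ℕ × ℕ} :
    x ∈ genD a b ↔ x.1 < a ∧ x.1 + x.2 = 2 * (a + b) + 1 := mem_seg (by omega)

lemma card_genF (a b : ℕ) (hn : 1 ≤ a + b) :
    (genF a b).card
      = (b + 1) + (∑ s ∈ Finset.Icc (a + b + 1) (2 * (a + b) - 1), (s + 1)) + 2 * a + a := by
  have hAB : Disjoint (genA a b) (genB a b) :=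
    Finset.disjoint_left.mpr (fun {x} hx hx' => by
      rw [mem_genA] at hx; rw [mem_genB] at hx'; omega)
  have hABC : Disjoint (genA a b ∪ genB a b) (genC a b) :=
    Finset.disjoint_left.mpr (fun {x} hx hx' => by
      rw [Finset.mem_union, mem_genA, mem_genB] at hx; rw [mem_genC] at hx'; omega)
  have hABCD : Disjoint (genA a b ∪ genB a b ∪ genC a b) (genD a b) :=
    Finset.disjoint_left.mpr (fun {x} hx hx' => by
      rw [Finset.mem_union, Finset.mem_union, mem_genA, mem_genB, mem_genC] at hx
      rw [mem_genD] at hx'; omega)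
  have hcardA : (genA a b).card = b + 1 := by
    rw [genA, Finset.card_sdiff_of_subset (seg_subset (by omega)), card_seg, card_seg]; omega
  have hcardB : (genB a b).card = ∑ s ∈ Finset.Icc (a + b + 1) (2 * (a + b) - 1), (s + 1) := by
    rw [genB, Finset.card_biUnion (fun s _ t _ hst => seg_disj (le_refl _) (le_refl _) hst)]
    exact Finset.sum_congr rfl (fun s _ => card_seg s (s + 1))
  rw [genF, Finset.card_union_of_disjoint hABCD, Finset.card_union_of_disjoint hABC,
    Finset.card_union_of_disjoint hAB, hcardA, hcardB, genC, genD, card_seg, card_seg]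

lemma card_cmp (a b : ℕ) (hn : 1 ≤ a + b) : 2 * (gamF a b).card ≤ (genF a b).card := by
  have hicc : Finset.Icc (a + b + 1) (2 * (a + b) - 1) = Finset.Ico (a + b + 1) (2 * (a + b)) := by
    rw [← Finset.Ico_add_one_right_eq_Icc, show (2 * (a + b) - 1) + 1 = 2 * (a + b) by omega]
  have key : (∑ s ∈ Finset.range (a + b + 1), (s + 1))
      + (∑ s ∈ Finset.Icc (a + b + 1) (2 * (a + b) - 1), (s + 1))
      = ∑ s ∈ Finset.range (2 * (a + b)), (s + 1) := by
    rw [hicc, Finset.range_eq_Ico, Finset.range_eq_Ico]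
    exact Finset.sum_Ico_consecutive _ (Nat.zero_le _) (by omega)
  have g1 := gauss (a + b + 1)
  have g2 := gauss (2 * (a + b))
  have hkey2 : (a + b + 1) * (a + b + 1 + 1)
      + 2 * (∑ s ∈ Finset.Icc (a + b + 1) (2 * (a + b) - 1), (s + 1))
      = 2 * (a + b) * (2 * (a + b) + 1) := by
    have h2 : 2 * ((∑ s ∈ Finset.range (a + b + 1), (s + 1))
        + (∑ s ∈ Finset.Icc (a + b + 1) (2 * (a + b) - 1), (s + 1)))
        = 2 * ∑ s ∈ Finset.range (2 * (a + b)), (s + 1) := by rw [key]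
    rw [Nat.mul_add, g1, g2] at h2
    exact h2
  have hnn : a + b ≤ (a + b) * (a + b) := Nat.le_mul_of_pos_left (a + b) (by omega)
  rw [card_genF a b hn]
  suffices h : 2 * (2 * (gamF a b).card)
      ≤ 2 * ((b + 1) + (∑ s ∈ Finset.Icc (a + b + 1) (2 * (a + b) - 1), (s + 1)) + 2 * a + a) by
    omega
  rw [card_gamF]
  nlinarith [hkey2, hnn]

end AuxStmt17

lemma genF_subset (a b : ℕ) (hn : 1 ≤ a + b) : ↑(genF a b) ⊆ msg2 (ord2 (a, b)) := by
  intro x hx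
  rw [Finset.mem_coe, genF, Finset.mem_union, Finset.mem_union, Finset.mem_union,
    mem_genA, mem_genB, mem_genC, mem_genD] at hx
  rw [mem_msg2]
  refine ⟨⟨by rw [mem_S]; omega, by rw [Ne, pzero_iff]; omega⟩, ?_⟩
  intro y z hy hy0 hz hz0 hyz
  rw [mem_S] at hy hz
  rw [Ne, pzero_iff] at hy0 hz0
  rw [padd_eq_iff] at hyz
  omega

lemma msg2_finite (a b : ℕ) (hn : 1 ≤ a + b) : (msg2 (ord2 (a, b))).Finite := by
  apply Set.Finite.subset
    (Finset.finite_toSet ((Finset.range (2 * (a + b) + 2)).biUnion (fun s => seg s (s + 1))))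
  intro x hx
  rw [mem_msg2] at hx
  obtain ⟨⟨hxS, hx0⟩, hdec⟩ := hx
  rw [Finset.mem_coe, Finset.mem_biUnion]
  refine ⟨x.1 + x.2, Finset.mem_range.mpr ?_, (mem_seg (le_refl _)).mpr ⟨by omega, rfl⟩⟩
  by_contra hbig
  push_neg at hbig
  have hbig' : 2 * (a + b) + 2 ≤ x.1 + x.2 := hbig
  refine hdec (min (a + b + 1) x.1, (a + b + 1) - min (a + b + 1) x.1)
    (x.1 - min (a + b + 1) x.1, x.2 - ((a + b + 1) - min (a + b + 1) x.1))
    ?_ ?_ ?_ ?_ ?_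
  · rw [mem_S]; simp only; omega
  · rw [Ne, pzero_iff]; simp only; omega
  · rw [mem_S]; simp only; omega
  · rw [Ne, pzero_iff]; simp only; omega
  · rw [padd_eq_iff]; simp only; constructor <;> omega

/-- Every ordinary ℕ²-semigroup (≠ ℕ²) under the graded lexicographic order satisfies the
Generalized Wilf inequality and the Extended Wilf inequality. -/
theorem statement17 (c : ℕ × ℕ) (hS : ord2 c ≠ Set.univ) :
    nu2 (ord2 c) * (msg2 (ord2 c)).ncard ≥ 2 * gamma2 (ord2 c) ∧
    ∀ f : ℕ × ℕ, f ∉ ord2 c → (∀ x, x ∉ ord2 c → glexLe x f) →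
      smallCount2 (ord2 c) f * (msg2 (ord2 c)).ncard ≥ NNum2 f + 1 := by
  obtain ⟨a, b⟩ := c
  obtain ⟨w, hw⟩ := (Set.ne_univ_iff_exists_notMem _).mp hS
  have hw' := not_mem_S.mp hw
  have hn : 1 ≤ a + b := by omega
  have hzS : (0 : ℕ × ℕ) ∈ ord2 (a, b) := by rw [mem_S]; left; exact ⟨rfl, rfl⟩
  -- embedding dimension lower bound
  have he : (genF a b).card ≤ (msg2 (ord2 (a, b))).ncard := by
    rw [← Set.ncard_coe_finset (genF a b)]
    exact Set.ncard_le_ncard (genF_subset a b hn) (msg2_finite a b hn)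
  have hcmp := card_cmp a b hn
  -- gamma upper bound
  have hγ : gamma2 (ord2 (a, b)) ≤ (gamF a b).card := by
    rw [gamma2, ← Set.ncard_coe_finset (gamF a b)]
    refine Set.ncard_le_ncard ?_ (Finset.finite_toSet _)
    rintro x ⟨h, hh, h1, h2⟩
    rw [not_mem_S] at hh
    rw [Finset.mem_coe, mem_gamF]
    omega
  -- nu = 1
  have hν : nu2 (ord2 (a, b)) = 1 := by
    have hset : {x | x ∈ ord2 (a, b) ∧ ∃ h, h ∉ ord2 (a, b) ∧ x.1 ≤ h.1 ∧ x.2 ≤ h.2}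
        = {(0 : ℕ × ℕ)} := by
      ext x
      simp only [Set.mem_setOf_eq, Set.mem_singleton_iff]
      constructor
      · rintro ⟨hxS, h, hh, h1, h2⟩
        rw [mem_S] at hxS
        rw [not_mem_S] at hh
        rw [pzero_iff]
        omega
      · rintro rfl
        exact ⟨hzS, w, hw, Nat.zero_le _, Nat.zero_le _⟩
    rw [nu2, hset, Set.ncard_singleton]
  constructor
  · rw [hν, one_mul]
    omega
  · intro f hf hf2
    have hf' := not_mem_S.mp hf
    have hsc : smallCount2 (ord2 (a, b)) f = 1 := by
      have hset : {s | s ∈ ord2 (a, b) ∧ glexLt s f} = {(0 : ℕ × ℕ)} := by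
        ext s
        simp only [Set.mem_setOf_eq, Set.mem_singleton_iff]
        constructor
        · rintro ⟨h1, h2⟩
          rw [mem_S] at h1
          simp only [glexLt] at h2
          rw [pzero_iff]
          omega
        · rintro rfl
          refine ⟨hzS, ?_⟩
          simp only [glexLt, Prod.fst_zero, Prod.snd_zero]
          omega
      rw [smallCount2, hset, Set.ncard_singleton]
    have h0g : (0 : ℕ × ℕ) ∈ gamF a b := by
      rw [mem_gamF]
      simp only [Prod.fst_zero, Prod.snd_zero]
      omega
    have hN : NNum2 f ≤ ((gamF a b).erase 0).card := by
      rw [NNum2, ← Set.ncard_coe_finset]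
      refine Set.ncard_le_ncard ?_ (Finset.finite_toSet _)
      rintro x ⟨hx0, hxf⟩
      rw [Ne, pzero_iff] at hx0
      simp only [glexLe] at hxf
      rw [Finset.mem_coe, Finset.mem_erase, Ne, pzero_iff, mem_gamF]
      omega
    rw [Finset.card_erase_of_mem h0g] at hN
    have hpos : 0 < (gamF a b).card := Finset.card_pos.mpr ⟨0, h0g⟩
    rw [hsc, one_mul]
    omega
end

section
/- Fix the graded lexicographic order ⪯ on ℕ². Let k ≥ 1 be an integer, let m ∈ ℕ² \ {0}, and let S = {0, m, 2m, …, (k−1)m} ∪ {x ∈ ℕ² : km ⪯ x} be the mult-embedded ℕ²-semigroup with multiplicity m and conductor km, and assume S ≠ ℕ². Then S satisfies both the Generalized Wilf inequality ν(S)·e(S) ≥ 2·γ(S) and the Extended Wilf inequality n(S)·e(S) ≥ N(Fb(S)) + 1. -/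
open Set

namespace W19

def T : ℕ → ℕ
  | 0 => 0
  | n+1 => T n + n + 1

lemma T_succ (n : ℕ) : T (n+1) = T n + n + 1 := rfl

lemma T_mono : Monotone T := monotone_nat_of_le_succ (fun n => by rw [T_succ]; omega)

lemma T_add (a b : ℕ) : T (a + b) = T a + a * b + T b := by
  induction b with
  | zero => simp [T]
  | succ b ih => rw [show a + (b+1) = (a+b)+1 from rfl, T_succ, T_succ, ih]; ring

lemma two_T (n : ℕ) : 2 * T n = n * (n + 1) := by
  induction n with
  | zero => simp [T]
  | succ n ih => rw [T_succ]; ring_nf; ring_nf at ih; omega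

def toP (x : ℕ × ℕ) : ℕ := T (x.1 + x.2) + x.1

lemma toP_lt_of_glexLt {x y : ℕ × ℕ} (h : glexLt x y) : toP x < toP y := by
  rcases h with h | ⟨h1, h2⟩
  · have h4 : T (x.1 + x.2 + 1) ≤ T (y.1 + y.2) := T_mono (by omega)
    have h3 : T (x.1 + x.2 + 1) = T (x.1 + x.2) + (x.1 + x.2) + 1 := T_succ _
    show T (x.1 + x.2) + x.1 < T (y.1 + y.2) + y.1
    omega
  · show T (x.1 + x.2) + x.1 < T (y.1 + y.2) + y.1
    rw [h1]; omega

lemma glex_trichotomy (x y : ℕ × ℕ) : glexLt x y ∨ x = y ∨ glexLt y x := by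
  unfold glexLt
  by_cases h : x.1 + x.2 = y.1 + y.2
  · rcases lt_trichotomy x.1 y.1 with h1 | h1 | h1
    · left; right; exact ⟨h, h1⟩
    · right; left; exact Prod.ext h1 (by omega)
    · right; right; right; exact ⟨h.symm, h1⟩
  · rcases Nat.lt_or_ge (x.1 + x.2) (y.1 + y.2) with h1 | h1
    · left; left; exact h1
    · right; right; left; omega

lemma toP_lt_iff {x y : ℕ × ℕ} : toP x < toP y ↔ glexLt x y := by
  constructor
  · intro h
    rcases glex_trichotomy x y with h1 | h1 | h1
    · exact h1
    · subst h1; omega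
    · exact absurd (toP_lt_of_glexLt h1) (by omega)
  · exact toP_lt_of_glexLt

lemma toP_inj {x y : ℕ × ℕ} (h : toP x = toP y) : x = y := by
  rcases glex_trichotomy x y with h1 | h1 | h1
  · exact absurd (toP_lt_of_glexLt h1) (by omega)
  · exact h1
  · exact absurd (toP_lt_of_glexLt h1) (by omega)

lemma glexLe_iff_le {x y : ℕ × ℕ} : glexLe x y ↔ toP x ≤ toP y := by
  constructor
  · intro h
    rcases h with h | ⟨h1, h2⟩
    · exact le_of_lt (toP_lt_of_glexLt (Or.inl h))
    · rcases Nat.lt_or_ge x.1 y.1 with h3 | h3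
      · exact le_of_lt (toP_lt_of_glexLt (Or.inr ⟨h1, h3⟩))
      · have : x = y := Prod.ext (le_antisymm h2 h3) (by omega)
        subst this; rfl
  · intro h
    rcases glex_trichotomy x y with h1 | h1 | h1
    · rcases h1 with h1 | h1
      · exact Or.inl h1
      · exact Or.inr ⟨h1.1, le_of_lt h1.2⟩
    · subst h1; right; omega
    · exact absurd (toP_lt_of_glexLt h1) (by omega)

lemma glexLt_iff_not_le {x y : ℕ × ℕ} : glexLt x y ↔ ¬ glexLe y x := by
  rw [glexLe_iff_le, ← toP_lt_iff]; omega

def sc (x : ℕ × ℕ) : ℕ × ℕ := if x.2 = 0 then (0, x.1 + 1) else (x.1 + 1, x.2 - 1)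

lemma toP_sc (x : ℕ × ℕ) : toP (sc x) = toP x + 1 := by
  rcases x with ⟨a, b⟩
  unfold sc toP
  rcases Nat.eq_zero_or_pos b with hb | hb
  · subst hb
    simp only [if_pos rfl]
    show T (0 + (a + 1)) + 0 = T (a + 0) + a + 1
    have h1 : 0 + (a + 1) = a + 1 := by omega
    have h2 : a + 0 = a := by omega
    rw [h1, h2, T_succ]
  · rw [if_neg (by simpa using (by omega : ¬ b = 0))]
    show T (a + 1 + (b - 1)) + (a + 1) = T (a + b) + a + 1
    have h2 : a + 1 + (b - 1) = a + b := by omega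
    rw [h2]; omega

def ofP : ℕ → ℕ × ℕ
  | 0 => (0, 0)
  | n+1 => sc (ofP n)

lemma toP_ofP (n : ℕ) : toP (ofP n) = n := by
  induction n with
  | zero => rfl
  | succ n ih => rw [ofP, toP_sc, ih]

lemma ofP_toP (x : ℕ × ℕ) : ofP (toP x) = x := toP_inj (toP_ofP (toP x))

lemma ofP_injective : Function.Injective ofP := by
  intro a b h
  have := toP_ofP a
  rw [h, toP_ofP] at this
  omega

lemma glexIio_eq (x : ℕ × ℕ) : {y | glexLt y x} = ofP '' (Set.Iio (toP x)) := by
  ext y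
  simp only [Set.mem_setOf_eq, Set.mem_image, Set.mem_Iio]
  constructor
  · intro h; exact ⟨toP y, toP_lt_iff.2 h, ofP_toP y⟩
  · rintro ⟨n, hn, rfl⟩; rw [← toP_lt_iff, toP_ofP]; exact hn

lemma ncard_glexIio (x : ℕ × ℕ) : {y | glexLt y x}.ncard = toP x := by
  rw [glexIio_eq, Set.ncard_image_of_injective _ ofP_injective, ← Finset.coe_range,
    Set.ncard_coe_finset, Finset.card_range]

lemma finite_glexIio (x : ℕ × ℕ) : {y | glexLt y x}.Finite := by
  rw [glexIio_eq]
  exact ((Set.finite_Iio _).image _)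


lemma smul_coords (i : ℕ) (m : ℕ × ℕ) : i • m = (i * m.1, i * m.2) := rfl

lemma glexLe_add_right {x y : ℕ × ℕ} (z : ℕ × ℕ) (h : glexLe x y) :
    glexLe (x + z) (y + z) := by
  rcases h with h | ⟨h1, h2⟩
  · left; simp only [Prod.fst_add, Prod.snd_add]; omega
  · right; simp only [Prod.fst_add, Prod.snd_add]; omega

lemma glexLe_add_left {x y : ℕ × ℕ} (z : ℕ × ℕ) (h : glexLe x y) :
    glexLe (z + x) (z + y) := by
  rw [add_comm z x, add_comm z y]; exact glexLe_add_right z h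

section

variable {k : ℕ} {m : ℕ × ℕ}

lemma mem_multEmb {x : ℕ × ℕ} :
    x ∈ multEmb k m ↔ (∃ i < k, x = i • m) ∨ glexLe (k • m) x := Iff.rfl

lemma glexLe_smul_le {i j : ℕ} (hij : i ≤ j) : glexLe (i • m) (j • m) := by
  rw [smul_coords, smul_coords]
  have h1 : i * m.1 ≤ j * m.1 := Nat.mul_le_mul_right _ hij
  have h2 : i * m.2 ≤ j * m.2 := Nat.mul_le_mul_right _ hij
  rcases Nat.lt_or_ge (i * m.1 + i * m.2) (j * m.1 + j * m.2) with h | h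
  · exact Or.inl h
  · exact Or.inr ⟨by omega, by omega⟩

lemma smul_mem (i : ℕ) : i • m ∈ multEmb k m := by
  rcases Nat.lt_or_ge i k with h | h
  · exact Or.inl ⟨i, h, rfl⟩
  · exact Or.inr (glexLe_smul_le h)

lemma deg_pos (hm : m ≠ 0) : 1 ≤ m.1 + m.2 := by
  rcases m with ⟨a, b⟩
  simp only [Ne, Prod.mk_eq_zero, not_and_or] at hm
  rcases hm with h | h <;> simp <;> omega

lemma glexLt_smul_lt (hm : m ≠ 0) {i j : ℕ} (hij : i < j) : glexLt (i • m) (j • m) := by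
  have hd := deg_pos hm
  rw [smul_coords, smul_coords]
  left
  show i * m.1 + i * m.2 < j * m.1 + j * m.2
  calc i * m.1 + i * m.2 = i * (m.1 + m.2) := by ring
    _ < j * (m.1 + m.2) := by
        exact Nat.mul_lt_mul_of_lt_of_le hij (le_refl _) (by omega)
    _ = j * m.1 + j * m.2 := by ring

lemma deg_le_of_glexLe {x y : ℕ × ℕ} (h : glexLe x y) : x.1 + x.2 ≤ y.1 + y.2 := by
  rcases h with h | ⟨h1, _⟩ <;> omega

/-- every nonzero element of S has degree at least that of m -/
lemma deg_lower (hm : m ≠ 0) (hk : 1 ≤ k) {x : ℕ × ℕ}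
    (hx : x ∈ multEmb k m) (hx0 : x ≠ 0) : m.1 + m.2 ≤ x.1 + x.2 := by
  rcases hx with ⟨i, _, rfl⟩ | h
  · have hi : 1 ≤ i := by
      rcases Nat.eq_zero_or_pos i with h | h
      · subst h; simp at hx0
      · exact h
    have := deg_le_of_glexLe (glexLe_smul_le (m := m) hi)
    simpa [smul_coords] using this
  · have h1 := deg_le_of_glexLe h
    have h2 := deg_le_of_glexLe (glexLe_smul_le (m := m) hk)
    simp only [smul_coords, one_smul, one_mul] at h1 h2
    omega

end

section
variable {k : ℕ} {m : ℕ × ℕ}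

lemma not_mem_multEmb {x : ℕ × ℕ} :
    x ∉ multEmb k m ↔ (¬ ∃ i < k, x = i • m) ∧ glexLt x (k • m) := by
  rw [mem_multEmb, not_or, glexLt_iff_not_le]

lemma smul_injective (hm : m ≠ 0) : Function.Injective (· • m : ℕ → ℕ × ℕ) := by
  intro i j h
  rcases Nat.lt_trichotomy i j with h1 | h1 | h1
  · have := toP_lt_of_glexLt (glexLt_smul_lt hm h1); simp [h] at this
  · exact h1
  · have := toP_lt_of_glexLt (glexLt_smul_lt hm h1); simp [h] at this

lemma compl_multEmb_eq :
    (multEmb k m)ᶜ = {x | glexLt x (k • m)} \ ((· • m) '' (Set.Iio k)) := by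
  ext x
  simp only [Set.mem_compl_iff, not_mem_multEmb, Set.mem_diff, Set.mem_setOf_eq,
    Set.mem_image, Set.mem_Iio]
  constructor
  · rintro ⟨h1, h2⟩
    exact ⟨h2, fun ⟨i, hi, he⟩ => h1 ⟨i, hi, he.symm⟩⟩
  · rintro ⟨h2, h1⟩
    exact ⟨fun ⟨i, hi, he⟩ => h1 ⟨i, hi, he.symm⟩, h2⟩

lemma compl_multEmb_finite : ((multEmb k m)ᶜ).Finite := by
  rw [compl_multEmb_eq]
  exact (finite_glexIio _).diff

lemma ncard_smul_image (hm : m ≠ 0) (n : ℕ) : ((· • m) '' (Set.Iio n)).ncard = n := by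
  rw [Set.ncard_image_of_injective _ (smul_injective hm), ← Finset.coe_range,
    Set.ncard_coe_finset, Finset.card_range]

lemma ncard_compl_multEmb (hm : m ≠ 0) :
    ((multEmb k m)ᶜ).ncard + k = toP (k • m) := by
  rw [compl_multEmb_eq]
  have hsub : ((· • m) '' (Set.Iio k)) ⊆ {x | glexLt x (k • m)} := by
    rintro x ⟨i, hi, rfl⟩
    exact glexLt_smul_lt hm hi
  have h2 := Set.ncard_diff_add_ncard_of_subset hsub (finite_glexIio (k • m))
  rw [ncard_smul_image hm, ncard_glexIio] at h2
  exact h2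

end

section
variable {k : ℕ} {m : ℕ × ℕ}

lemma toP_eq_zero_iff {x : ℕ × ℕ} : toP x = 0 ↔ x = 0 := by
  constructor
  · intro h; have := ofP_toP x; rw [h] at this; exact this.symm
  · rintro rfl; rfl

lemma pred_not_mem (hm : m ≠ 0) (hk : 1 ≤ k) (hP : k + 1 ≤ toP (k • m)) :
    ofP (toP (k • m) - 1) ∉ multEmb k m := by
  have htp : toP (ofP (toP (k • m) - 1)) = toP (k • m) - 1 := toP_ofP _
  have hsc : sc (ofP (toP (k • m) - 1)) = k • m := by
    apply toP_inj
    rw [toP_sc, htp]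
    omega
  intro hpS
  rcases hpS with ⟨i, hik, hpe⟩ | hbig
  · rw [hpe] at hsc htp
    by_cases hb : (i • m).2 = 0
    · rw [sc, if_pos hb] at hsc
      rw [smul_coords] at hsc hb
      rw [Prod.ext_iff] at hsc
      simp only [smul_coords] at hsc
      have hm1 : m.1 = 0 := by
        have := hsc.1
        simp at this
        rcases this with h | h
        · omega
        · exact h
      have hi0 : i = 0 := by
        have hm2 : 1 ≤ m.2 := by
          rcases m with ⟨m1, m2⟩
          simp only [Ne, Prod.mk_eq_zero, not_and_or] at hm
          simp at hm1 ⊢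
          subst hm1
          rcases hm with h | h
          · omega
          · omega
        simp at hb
        rcases hb with h | h
        · exact h
        · omega
      have h21 : k * m.2 = i * m.1 + 1 := hsc.2.symm
      rw [hi0, hm1] at h21
      simp at h21
      have hk1 : k = 1 ∧ m.2 = 1 := by
        constructor
        · by_contra hko
          have h2le : 2 ≤ k ∨ k = 0 := by omega
          rcases h2le with h | h
          · nlinarith
          · rw [h] at h21; simp at h21
        · by_contra hmo
          have : m.2 = 0 ∨ 2 ≤ m.2 := by omega
          rcases this with h | h
          · rw [h] at h21; simp at h21
          · nlinarith
      have hmeq : m = ((0 : ℕ), (1 : ℕ)) := Prod.ext hm1 hk1.2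
      rw [hmeq, hk1.1] at hP
      have : toP ((1 : ℕ) • ((0 : ℕ), (1 : ℕ))) = 1 := rfl
      omega
    · rw [sc, if_neg hb] at hsc
      rw [Prod.ext_iff] at hsc
      simp only [smul_coords] at hsc hb
      have h5 : (i + 1) * m.2 ≤ k * m.2 := Nat.mul_le_mul_right _ (by omega)
      have h6 : (i + 1) * m.2 = i * m.2 + m.2 := by ring
      have hm2 : m.2 ≠ 0 := by
        intro h; rw [h] at hb; simp at hb
      have := hsc.2
      omega
  · have := glexLe_iff_le.1 hbig
    rw [htp] at this
    omega

lemma frob_eq (hm : m ≠ 0) (hk : 1 ≤ k) (hP : k + 1 ≤ toP (k • m)) {f : ℕ × ℕ}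
    (hf : f ∉ multEmb k m) (hmax : ∀ x, x ∉ multEmb k m → glexLe x f) :
    f = ofP (toP (k • m) - 1) := by
  have hp := pred_not_mem hm hk hP
  have h1 : toP f < toP (k • m) := toP_lt_of_glexLt (not_mem_multEmb.1 hf).2
  have h2 : toP (ofP (toP (k • m) - 1)) ≤ toP f := glexLe_iff_le.1 (hmax _ hp)
  rw [toP_ofP] at h2
  apply toP_inj
  rw [toP_ofP]
  omega

lemma smallSet_eq (hm : m ≠ 0) (hk : 1 ≤ k) (hP : k + 1 ≤ toP (k • m)) :
    {s | s ∈ multEmb k m ∧ glexLt s (ofP (toP (k • m) - 1))} = (· • m) '' (Set.Iio k) := by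
  ext s
  simp only [Set.mem_setOf_eq, Set.mem_image, Set.mem_Iio]
  constructor
  · rintro ⟨hs, hlt⟩
    have hlt2 : toP s < toP (k • m) - 1 := by
      have := toP_lt_of_glexLt hlt
      rwa [toP_ofP] at this
    rcases hs with ⟨i, hik, rfl⟩ | hbig
    · exact ⟨i, hik, rfl⟩
    · have := glexLe_iff_le.1 hbig
      omega
  · rintro ⟨i, hik, rfl⟩
    refine ⟨smul_mem i, ?_⟩
    rw [← toP_lt_iff, toP_ofP]
    have h1 : toP (i • m) < toP (k • m) := toP_lt_of_glexLt (glexLt_smul_lt hm hik)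
    have h2 : toP (i • m) ≠ toP (k • m) - 1 := by
      intro h
      have : i • m = ofP (toP (k • m) - 1) := by
        apply toP_inj; rw [toP_ofP, h]
      exact pred_not_mem hm hk hP (this ▸ smul_mem i)
    omega

lemma NNumSet_eq (c : ℕ × ℕ) :
    {x : ℕ × ℕ | x ≠ 0 ∧ glexLe x (ofP (toP c - 1))} = ofP '' (Set.Icc 1 (toP c - 1)) := by
  ext x
  simp only [Set.mem_setOf_eq, Set.mem_image, Set.mem_Icc]
  constructor
  · rintro ⟨h0, hle⟩
    refine ⟨toP x, ⟨?_, ?_⟩, ofP_toP x⟩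
    · rcases Nat.eq_zero_or_pos (toP x) with h | h
      · exact absurd (toP_eq_zero_iff.1 h) h0
      · exact h
    · have := glexLe_iff_le.1 hle
      rwa [toP_ofP] at this
  · rintro ⟨n, ⟨h1, h2⟩, rfl⟩
    constructor
    · intro h
      rw [← toP_eq_zero_iff, toP_ofP] at h
      omega
    · rw [glexLe_iff_le, toP_ofP, toP_ofP]
      exact h2

lemma zero_iff {x : ℕ × ℕ} : x = 0 ↔ x.1 = 0 ∧ x.2 = 0 := by
  rcases x with ⟨a, b⟩; simp [Prod.ext_iff]

lemma msg2_deg_bound (hm : m ≠ 0) (hk : 1 ≤ k) {x : ℕ × ℕ}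
    (hx : x ∈ msg2 (multEmb k m)) : x.1 + x.2 ≤ 2 * (k * (m.1 + m.2)) + 1 := by
  obtain ⟨⟨hxS, hx0⟩, hnd⟩ := hx
  simp only [Set.mem_singleton_iff] at hx0
  by_contra hbig
  push_neg at hbig
  set D := k * (m.1 + m.2) with hD
  have hDc : (k • m).1 + (k • m).2 = D := by
    rw [smul_coords]; simp; ring
  set t := min x.1 (D + 1) with ht
  have h1 : t ≤ x.1 := min_le_left _ _
  have h2 : t ≤ D + 1 := min_le_right _ _
  have h3 : t = x.1 ∨ t = D + 1 := min_choice _ _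
  have hx2 : D + 1 - t ≤ x.2 := by omega
  set u : ℕ × ℕ := (t, D + 1 - t) with hu
  set v : ℕ × ℕ := (x.1 - t, x.2 - (D + 1 - t)) with hv
  have huv : u + v = x := by
    rw [hu, hv, Prod.ext_iff]
    constructor
    · show t + (x.1 - t) = x.1; omega
    · show D + 1 - t + (x.2 - (D + 1 - t)) = x.2; omega
  have hudeg : u.1 + u.2 = D + 1 := by rw [hu]; show t + (D + 1 - t) = D + 1; omega
  have hvdeg : D + 1 ≤ v.1 + v.2 := by
    rw [hv]; show D + 1 ≤ x.1 - t + (x.2 - (D + 1 - t)); omega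
  have huS : u ∈ multEmb k m := Or.inr (Or.inl (by omega))
  have hvS : v ∈ multEmb k m := Or.inr (Or.inl (by omega))
  have hu0 : u ≠ 0 := by
    intro h; rw [zero_iff] at h; omega
  have hv0 : v ≠ 0 := by
    intro h; rw [zero_iff] at h; omega
  exact hnd ⟨u, ⟨huS, hu0⟩, v, ⟨hvS, hv0⟩, huv⟩

lemma msg2_finite (hm : m ≠ 0) (hk : 1 ≤ k) : (msg2 (multEmb k m)).Finite := by
  apply Set.Finite.subset (Set.finite_Icc ((0, 0) : ℕ × ℕ)
    ((2 * (k * (m.1 + m.2)) + 1, 2 * (k * (m.1 + m.2)) + 1) : ℕ × ℕ))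
  intro x hx
  have := msg2_deg_bound hm hk hx
  rw [Set.mem_Icc]
  constructor
  · exact ⟨Nat.zero_le _, Nat.zero_le _⟩
  · exact ⟨by omega, by omega⟩

end

section
variable {k : ℕ} {m : ℕ × ℕ}

lemma deg_le_of_glexLt {x y : ℕ × ℕ} (h : glexLt x y) : x.1 + x.2 ≤ y.1 + y.2 := by
  rcases h with h | ⟨h1, _⟩ <;> omega

lemma deg_smul' (i : ℕ) (m : ℕ × ℕ) : (i • m).1 + (i • m).2 = i * (m.1 + m.2) := by
  rw [smul_coords]; show i * m.1 + i * m.2 = i * (m.1 + m.2); ring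

lemma sum_coords {a b x : ℕ × ℕ} (h : a + b = x) : a.1 + b.1 = x.1 ∧ a.2 + b.2 = x.2 :=
  ⟨by rw [← h]; rfl, by rw [← h]; rfl⟩

lemma m_mem_msg2 (hm : m ≠ 0) (hk : 1 ≤ k) : m ∈ msg2 (multEmb k m) := by
  have hd := deg_pos hm
  have hmS : m ∈ multEmb k m := by
    have := smul_mem (k := k) (m := m) 1
    rwa [one_smul] at this
  refine ⟨⟨hmS, by simpa using hm⟩, ?_⟩
  rintro ⟨a, ⟨haS, ha0⟩, b, ⟨hbS, hb0⟩, hab⟩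
  simp only [Set.mem_singleton_iff] at ha0 hb0
  have da := deg_lower hm hk haS ha0
  have db := deg_lower hm hk hbS hb0
  obtain ⟨e1, e2⟩ := sum_coords hab
  omega

lemma A_mem_msg2 (hm : m ≠ 0) (hk : 1 ≤ k) {x : ℕ × ℕ}
    (h1 : glexLe (k • m) x) (h2 : glexLt x (k • m + m)) (h3 : x ≠ k • m) :
    x ∈ msg2 (multEmb k m) := by
  have hd := deg_pos hm
  have c1 : (k • m).1 = k * m.1 := rfl
  have c2 : (k • m).2 = k * m.2 := rfl
  have cc1 : (k • m + m).1 = k * m.1 + m.1 := rfl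
  have cc2 : (k • m + m).2 = k * m.2 + m.2 := rfl
  have hkm1 : m.1 ≤ k * m.1 := Nat.le_mul_of_pos_left _ (by omega)
  have hkm2 : m.2 ≤ k * m.2 := Nat.le_mul_of_pos_left _ (by omega)
  refine ⟨⟨Or.inr h1, ?_⟩, ?_⟩
  · simp only [Set.mem_singleton_iff]
    intro h0
    subst h0
    have := deg_le_of_glexLe h1
    simp only [Prod.fst_zero, Prod.snd_zero] at this
    omega
  · rintro ⟨a, ⟨haS, ha0⟩, b, ⟨hbS, hb0⟩, hab⟩
    simp only [Set.mem_singleton_iff] at ha0 hb0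
    have key : ∀ (i : ℕ) (b : ℕ × ℕ), 1 ≤ i → glexLe (k • m) b → ¬ (i • m + b = x) := by
      intro i b hi1 hbig he
      have s0 : glexLe ((1 : ℕ) • m) (i • m) := glexLe_smul_le hi1
      rw [one_smul] at s0
      have s1 : glexLe (m + k • m) (i • m + k • m) := glexLe_add_right _ s0
      have s2 : glexLe (i • m + k • m) (i • m + b) := glexLe_add_left _ hbig
      have t1 := glexLe_iff_le.1 s1
      have t2 := glexLe_iff_le.1 s2
      have t3 : toP (i • m + b) = toP x := by rw [he]
      have t4 := toP_lt_of_glexLt h2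
      have t5 : k • m + m = m + k • m := add_comm _ _
      rw [t5] at t4
      omega
    have hmul : ∀ (y : ℕ × ℕ), y ∈ multEmb k m → y ≠ 0 →
        (∃ i, 1 ≤ i ∧ y = i • m) ∨ glexLe (k • m) y := by
      intro y hy hy0
      rcases hy with ⟨i, _, rfl⟩ | h
      · refine Or.inl ⟨i, ?_, rfl⟩
        rcases Nat.eq_zero_or_pos i with h | h
        · subst h; simp at hy0
        · exact h
      · exact Or.inr h
    rcases hmul a haS ha0 with ⟨i, hi1, rfl⟩ | habig
    · rcases hmul b hbS hb0 with ⟨j, hj1, rfl⟩ | hbbig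
      · have hx : (i + j) • m = x := by rw [add_smul]; exact hab
        have hkl : k ≤ i + j := by
          by_contra hc
          push_neg at hc
          have := toP_lt_of_glexLt (glexLt_smul_lt hm hc)
          have h1' := glexLe_iff_le.1 h1
          rw [hx] at this
          omega
        rcases Nat.eq_or_lt_of_le hkl with he | hlt
        · exact h3 (by rw [← hx, ← he])
        · have s0 : glexLe ((k + 1) • m) ((i + j) • m) := glexLe_smul_le hlt
          rw [succ_nsmul] at s0
          have t6 := glexLe_iff_le.1 s0
          have t4 := toP_lt_of_glexLt h2
          rw [hx] at t6
          omega
      · exact key i b hi1 hbbig hab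
    · rcases hmul b hbS hb0 with ⟨j, hj1, rfl⟩ | hbbig
      · exact key j a hj1 habig (by rw [add_comm]; exact hab)
      · have da' := deg_le_of_glexLe habig
        have db' := deg_le_of_glexLe hbbig
        obtain ⟨e1, e2⟩ := sum_coords hab
        have hdegx := deg_le_of_glexLt h2
        have hk1 : k = 1 := by
          by_contra hne
          have h2k : 2 ≤ k := by omega
          have g1 : 2 * m.1 ≤ k * m.1 := Nat.mul_le_mul_right _ h2k
          have g2 : 2 * m.2 ≤ k * m.2 := Nat.mul_le_mul_right _ h2k
          omega
        subst hk1
        have o1 : 1 * m.1 = m.1 := one_mul _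
        have o2 : 1 * m.2 = m.2 := one_mul _
        rcases h2 with hlt | ⟨heq, hfst⟩
        · omega
        · rcases habig with ha1 | ⟨haeq, hafst⟩
          · omega
          · rcases hbbig with hb1 | ⟨hbeq, hbfst⟩
            · omega
            · omega

lemma xstar10 (hk : 1 ≤ k) : ((0 : ℕ), k + 2) ∈ msg2 (multEmb k ((1 : ℕ), (0 : ℕ))) := by
  have hc1 : (k • ((1 : ℕ), (0 : ℕ))).1 = k * 1 := rfl
  have hc2 : (k • ((1 : ℕ), (0 : ℕ))).2 = k * 0 := rfl
  refine ⟨⟨Or.inr (Or.inl (by omega)), by simp [zero_iff]⟩, ?_⟩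
  rintro ⟨a, ⟨haS, ha0⟩, b, ⟨hbS, hb0⟩, hab⟩
  simp only [Set.mem_singleton_iff] at ha0 hb0
  obtain ⟨e1, e2⟩ := sum_coords hab
  have e1' : a.1 + b.1 = 0 := e1
  have e2' : a.2 + b.2 = k + 2 := e2
  have claim : ∀ y : ℕ × ℕ, y ∈ multEmb k ((1 : ℕ), (0 : ℕ)) → y ≠ 0 → y.1 = 0 →
      k + 1 ≤ y.2 := by
    intro y hy hy0 hy1
    rcases hy with ⟨i, _, rfl⟩ | hbig
    · exfalso
      have z1 : (i • ((1 : ℕ), (0 : ℕ))).1 = i * 1 := rfl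
      have z2 : (i • ((1 : ℕ), (0 : ℕ))).2 = i * 0 := rfl
      have hi0 : i = 0 := by omega
      rw [hi0, zero_smul] at hy0
      exact hy0 rfl
    · rcases hbig with h | ⟨h, h'⟩ <;> omega
  have ca := claim a haS ha0 (by omega)
  have cb := claim b hbS hb0 (by omega)
  omega

lemma xstar01 (hk2 : 2 ≤ k) : ((k + 1 : ℕ), (0 : ℕ)) ∈ msg2 (multEmb k ((0 : ℕ), (1 : ℕ))) := by
  have hc1 : (k • ((0 : ℕ), (1 : ℕ))).1 = k * 0 := rfl
  have hc2 : (k • ((0 : ℕ), (1 : ℕ))).2 = k * 1 := rfl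
  refine ⟨⟨Or.inr (Or.inl (by omega)), by simp [zero_iff]⟩, ?_⟩
  rintro ⟨a, ⟨haS, ha0⟩, b, ⟨hbS, hb0⟩, hab⟩
  simp only [Set.mem_singleton_iff] at ha0 hb0
  obtain ⟨e1, e2⟩ := sum_coords hab
  have e1' : a.1 + b.1 = k + 1 := e1
  have e2' : a.2 + b.2 = 0 := e2
  have claim : ∀ y : ℕ × ℕ, y ∈ multEmb k ((0 : ℕ), (1 : ℕ)) → y ≠ 0 → y.2 = 0 →
      k ≤ y.1 := by
    intro y hy hy0 hy2
    rcases hy with ⟨i, _, rfl⟩ | hbig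
    · exfalso
      have z1 : (i • ((0 : ℕ), (1 : ℕ))).1 = i * 0 := rfl
      have z2 : (i • ((0 : ℕ), (1 : ℕ))).2 = i * 1 := rfl
      have hi0 : i = 0 := by omega
      rw [hi0, zero_smul] at hy0
      exact hy0 rfl
    · rcases hbig with h | ⟨h, h'⟩ <;> omega
  have ca := claim a haS ha0 (by omega)
  have cb := claim b hbS hb0 (by omega)
  omega

lemma xstar20 (hk : 1 ≤ k) : ((1 : ℕ), 2 * k + 2) ∈ msg2 (multEmb k ((2 : ℕ), (0 : ℕ))) := by
  have hc1 : (k • ((2 : ℕ), (0 : ℕ))).1 = k * 2 := rfl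
  have hc2 : (k • ((2 : ℕ), (0 : ℕ))).2 = k * 0 := rfl
  refine ⟨⟨Or.inr (Or.inl (by omega)), by simp [zero_iff]⟩, ?_⟩
  rintro ⟨a, ⟨haS, ha0⟩, b, ⟨hbS, hb0⟩, hab⟩
  simp only [Set.mem_singleton_iff] at ha0 hb0
  obtain ⟨e1, e2⟩ := sum_coords hab
  have e1' : a.1 + b.1 = 1 := e1
  have e2' : a.2 + b.2 = 2 * k + 2 := e2
  have claim : ∀ y : ℕ × ℕ, y ∈ multEmb k ((2 : ℕ), (0 : ℕ)) → y ≠ 0 → y.1 ≤ 1 →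
      2 * k + 1 ≤ y.1 + y.2 := by
    intro y hy hy0 hy1
    rcases hy with ⟨i, _, rfl⟩ | hbig
    · exfalso
      have z1 : (i • ((2 : ℕ), (0 : ℕ))).1 = i * 2 := rfl
      have z2 : (i • ((2 : ℕ), (0 : ℕ))).2 = i * 0 := rfl
      have hi0 : i = 0 := by omega
      rw [hi0, zero_smul] at hy0
      exact hy0 rfl
    · rcases hbig with h | ⟨h, h'⟩ <;> omega
  have ca := claim a haS ha0 (by omega)
  have cb := claim b hbS hb0 (by omega)
  omega

end

section
variable {k : ℕ} {m : ℕ × ℕ}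

lemma nuSet_finite :
    {x | x ∈ multEmb k m ∧ ∃ h, h ∉ multEmb k m ∧ x.1 ≤ h.1 ∧ x.2 ≤ h.2}.Finite := by
  apply Set.Finite.subset (Set.finite_Icc ((0, 0) : ℕ × ℕ)
    ((k * (m.1 + m.2), k * (m.1 + m.2)) : ℕ × ℕ))
  rintro x ⟨hxS, h, hh, hx1, hx2⟩
  have hlt := (not_mem_multEmb.1 hh).2
  have hdeg := deg_le_of_glexLt hlt
  have hDc := deg_smul' k m
  rw [Set.mem_Icc]
  exact ⟨⟨Nat.zero_le _, Nat.zero_le _⟩, ⟨by omega, by omega⟩⟩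

lemma nu_lower (hm : m ≠ 0) (hk : 1 ≤ k) (hm01 : m ≠ ((0 : ℕ), (1 : ℕ))) :
    k ≤ {x | x ∈ multEmb k m ∧ ∃ h, h ∉ multEmb k m ∧ x.1 ≤ h.1 ∧ x.2 ≤ h.2}.ncard := by
  have hd := deg_pos hm
  have hc1 : (k • m).1 = k * m.1 := rfl
  have hc2 : (k • m).2 = k * m.2 := rfl
  -- a gap dominating all i • m for i < k
  have hwit : ∃ w : ℕ × ℕ, w ∉ multEmb k m ∧ ∀ i < k, i * m.1 ≤ w.1 ∧ i * m.2 ≤ w.2 := by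
    by_cases h1 : 1 ≤ m.1
    · refine ⟨(k * m.1 - 1, k * m.2 + 1), ?_, ?_⟩
      · rw [not_mem_multEmb]
        have hkm1 : 1 * 1 ≤ k * m.1 := Nat.mul_le_mul hk h1
        constructor
        · rintro ⟨i, hik, he⟩
          rw [Prod.ext_iff] at he
          have he1 : k * m.1 - 1 = i * m.1 := he.1
          have he2 : k * m.2 + 1 = i * m.2 := he.2
          have hi1 : (i + 1) * m.2 ≤ k * m.2 := Nat.mul_le_mul_right _ (by omega)
          have hi2 : (i + 1) * m.2 = i * m.2 + m.2 := by ring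
          omega
        · right
          refine ⟨by omega, by omega⟩
      · intro i hik
        have hi1 : (i + 1) * m.1 ≤ k * m.1 := Nat.mul_le_mul_right _ (by omega)
        have hi2 : (i + 1) * m.1 = i * m.1 + m.1 := by ring
        have hi3 : i * m.2 ≤ k * m.2 := Nat.mul_le_mul_right _ (by omega)
        exact ⟨by omega, by omega⟩
    · have hm1 : m.1 = 0 := by omega
      have hm2 : 2 ≤ m.2 := by
        rcases Nat.lt_or_ge m.2 2 with h | h
        · exfalso
          rcases m with ⟨a, b⟩
          simp only at hm1 h
          subst hm1
          interval_cases b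
          · exact hm (by rfl)
          · exact hm01 rfl
        · exact h
      refine ⟨(1, k * m.2 - 2), ?_, ?_⟩
      · rw [not_mem_multEmb]
        have hkm2 : 1 * 2 ≤ k * m.2 := Nat.mul_le_mul hk hm2
        constructor
        · rintro ⟨i, hik, he⟩
          rw [Prod.ext_iff] at he
          have he1 : (1 : ℕ) = i * m.1 := he.1
          have hz : i * m.1 = i * 0 := by rw [hm1]
          omega
        · left
          have hz : k * m.1 = k * 0 := by rw [hm1]
          omega
      · intro i hik
        have hi1 : (i + 1) * m.2 ≤ k * m.2 := Nat.mul_le_mul_right _ (by omega)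
        have hi2 : (i + 1) * m.2 = i * m.2 + m.2 := by ring
        have hz : i * m.1 = i * 0 := by rw [hm1]
        exact ⟨by omega, by omega⟩
  obtain ⟨w, hw, hwall⟩ := hwit
  have hsub : ((· • m) '' (Set.Iio k)) ⊆
      {x | x ∈ multEmb k m ∧ ∃ h, h ∉ multEmb k m ∧ x.1 ≤ h.1 ∧ x.2 ≤ h.2} := by
    rintro x ⟨i, hik, rfl⟩
    refine ⟨smul_mem i, w, hw, ?_, ?_⟩
    · exact (hwall i hik).1
    · exact (hwall i hik).2
  have := Set.ncard_le_ncard hsub nuSet_finite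
  rwa [ncard_smul_image hm] at this

lemma nu_lower01 (hk2 : 2 ≤ k) :
    k - 1 ≤ {x | x ∈ multEmb k ((0 : ℕ), (1 : ℕ)) ∧
      ∃ h, h ∉ multEmb k ((0 : ℕ), (1 : ℕ)) ∧ x.1 ≤ h.1 ∧ x.2 ≤ h.2}.ncard := by
  have hm : ((0 : ℕ), (1 : ℕ)) ≠ (0 : ℕ × ℕ) := by
    intro h; rw [zero_iff] at h; simp at h
  have hc1 : (k • ((0 : ℕ), (1 : ℕ))).1 = k * 0 := rfl
  have hc2 : (k • ((0 : ℕ), (1 : ℕ))).2 = k * 1 := rfl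
  have hw : ((1 : ℕ), k - 2) ∉ multEmb k ((0 : ℕ), (1 : ℕ)) := by
    rw [not_mem_multEmb]
    constructor
    · rintro ⟨i, hik, he⟩
      rw [Prod.ext_iff] at he
      have he1 : (1 : ℕ) = i * 0 := he.1
      omega
    · left; omega
  have hsub : ((· • ((0 : ℕ), (1 : ℕ))) '' (Set.Iio (k - 1))) ⊆
      {x | x ∈ multEmb k ((0 : ℕ), (1 : ℕ)) ∧
        ∃ h, h ∉ multEmb k ((0 : ℕ), (1 : ℕ)) ∧ x.1 ≤ h.1 ∧ x.2 ≤ h.2} := by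
    rintro x ⟨i, hik, rfl⟩
    simp only [Set.mem_Iio] at hik
    refine ⟨smul_mem i, (1, k - 2), hw, ?_, ?_⟩
    · show i * 0 ≤ 1
      omega
    · show i * 1 ≤ k - 2
      omega
  have := Set.ncard_le_ncard hsub nuSet_finite
  rwa [ncard_smul_image hm] at this

lemma combineGW {ν e γ g ν₀ E : ℕ} (hν : ν₀ ≤ ν) (he : E ≤ e) (hγ : γ ≤ ν + g)
    (hE : 2 ≤ E) (hmain : 2 * g + 2 * ν₀ ≤ ν₀ * E) : 2 * γ ≤ ν * e := by
  obtain ⟨s, rfl⟩ : ∃ s, ν = ν₀ + s := ⟨ν - ν₀, by omega⟩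
  obtain ⟨t, rfl⟩ : ∃ t, e = E + t := ⟨e - E, by omega⟩
  have hexp : (ν₀ + s) * (E + t) = ν₀ * E + ν₀ * t + s * E + s * t := by ring
  have h2s : s * 2 ≤ s * E := Nat.mul_le_mul_left s hE
  have h2s' : s * 2 = 2 * s := by ring
  omega

end

section
variable {k : ℕ} {m : ℕ × ℕ}

lemma toP_smul (k : ℕ) (m : ℕ × ℕ) :
    toP (k • m) = T (k * (m.1 + m.2)) + k * m.1 := by
  have c1 : (k • m).1 = k * m.1 := rfl
  show T ((k • m).1 + (k • m).2) + (k • m).1 = _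
  rw [deg_smul', c1]

lemma toP_smul_add (k : ℕ) (m : ℕ × ℕ) :
    toP (k • m + m) = toP (k • m) +
      (k * (m.1 + m.2) * (m.1 + m.2) + T (m.1 + m.2) + m.1) := by
  have c1 : (k • m + m).1 = k * m.1 + m.1 := rfl
  have c2 : (k • m + m).2 = k * m.2 + m.2 := rfl
  rw [toP_smul]
  show T ((k • m + m).1 + (k • m + m).2) + (k • m + m).1 = _
  rw [c1, c2]
  have e : k * m.1 + m.1 + (k * m.2 + m.2) = k * (m.1 + m.2) + (m.1 + m.2) := by ring
  rw [e, T_add]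
  omega

lemma notA_of_ge {x : ℕ × ℕ} (hge : glexLe (k • m + m) x) :
    x ∉ ofP '' (Set.Ico (toP (k • m) + 1) (toP (k • m + m))) := by
  rintro ⟨n, hn, he⟩
  rw [Set.mem_Ico] at hn
  have h1 := glexLe_iff_le.1 hge
  have h2 : toP x = n := by rw [← he, toP_ofP]
  omega

lemma epilogue (hm : m ≠ 0) (hk : 1 ≤ k) (hP : k + 1 ≤ toP (k • m))
    (hγ : gamma2 (multEmb k m) ≤ nu2 (multEmb k m) + ((multEmb k m)ᶜ).ncard)
    {ν₀ E : ℕ}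
    (hν : ν₀ ≤ nu2 (multEmb k m)) (he : E ≤ (msg2 (multEmb k m)).ncard) (hE : 2 ≤ E)
    (hmain : 2 * ((multEmb k m)ᶜ).ncard + 2 * ν₀ ≤ ν₀ * E)
    (hPE : toP (k • m) ≤ k * E) :
    nu2 (multEmb k m) * (msg2 (multEmb k m)).ncard ≥ 2 * gamma2 (multEmb k m) ∧
    ∀ f : ℕ × ℕ, f ∉ multEmb k m → (∀ x, x ∉ multEmb k m → glexLe x f) →
      smallCount2 (multEmb k m) f * (msg2 (multEmb k m)).ncard ≥ NNum2 f + 1 := by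
  constructor
  · exact combineGW hν he hγ hE hmain
  · intro f hf hmax
    have hfe := frob_eq hm hk hP hf hmax
    have hs : smallCount2 (multEmb k m) f = k := by
      show ({s | s ∈ multEmb k m ∧ glexLt s f}).ncard = k
      rw [hfe, smallSet_eq hm hk hP, ncard_smul_image hm]
    have hNN : NNum2 f + 1 = toP (k • m) := by
      show ({x : ℕ × ℕ | x ≠ 0 ∧ glexLe x f}).ncard + 1 = toP (k • m)
      rw [hfe, NNumSet_eq, Set.ncard_image_of_injective _ ofP_injective,
        ← Finset.coe_Icc, Set.ncard_coe_finset, Nat.card_Icc]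
      omega
    have hEW : k * E ≤ k * (msg2 (multEmb k m)).ncard := Nat.mul_le_mul_left k he
    rw [hs]
    omega

end

end W19

open W19

/-- Every mult-embedded ℕ²-semigroup (≠ ℕ²) under the graded lexicographic order satisfies
the Generalized Wilf inequality and the Extended Wilf inequality. -/
theorem statement19 (k : ℕ) (hk : 1 ≤ k) (m : ℕ × ℕ) (hm : m ≠ 0)
    (hS : multEmb k m ≠ Set.univ) :
    nu2 (multEmb k m) * (msg2 (multEmb k m)).ncard ≥ 2 * gamma2 (multEmb k m) ∧
    ∀ f : ℕ × ℕ, f ∉ multEmb k m → (∀ x, x ∉ multEmb k m → glexLe x f) →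
      smallCount2 (multEmb k m) f * (msg2 (multEmb k m)).ncard ≥ NNum2 f + 1 := by
  classical
  have hd : 1 ≤ m.1 + m.2 := deg_pos hm
  have hg : ((multEmb k m)ᶜ).ncard + k = toP (k • m) := ncard_compl_multEmb hm
  have hg1 : 1 ≤ ((multEmb k m)ᶜ).ncard := by
    have := (Set.ncard_pos compl_multEmb_finite).2 (Set.nonempty_compl.2 hS)
    omega
  have hP : k + 1 ≤ toP (k • m) := by omega
  have hQP := toP_smul_add k m
  have hPval := toP_smul k m
  -- the A family of generators
  have hAcard : (ofP '' (Set.Ico (toP (k • m) + 1) (toP (k • m + m)))).ncard =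
      toP (k • m + m) - (toP (k • m) + 1) := by
    rw [Set.ncard_image_of_injective _ ofP_injective, ← Finset.coe_Ico,
      Set.ncard_coe_finset, Nat.card_Ico]
  have hAfin : (ofP '' (Set.Ico (toP (k • m) + 1) (toP (k • m + m)))).Finite :=
    (Set.finite_Ico _ _).image _
  have hAmsg : (ofP '' (Set.Ico (toP (k • m) + 1) (toP (k • m + m)))) ⊆
      msg2 (multEmb k m) := by
    rintro y ⟨n, hn, rfl⟩
    rw [Set.mem_Ico] at hn
    apply A_mem_msg2 hm hk
    · rw [glexLe_iff_le, toP_ofP]; omega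
    · rw [← toP_lt_iff, toP_ofP]; omega
    · intro hEq
      have h2 : toP (ofP n) = toP (k • m) := by rw [hEq]
      rw [toP_ofP] at h2
      omega
  have hmnotA : m ∉ ofP '' (Set.Ico (toP (k • m) + 1) (toP (k • m + m))) := by
    rintro ⟨n, hn, he⟩
    rw [Set.mem_Ico] at hn
    have h2 : toP m = n := by rw [← he, toP_ofP]
    have hmP : toP m ≤ toP (k • m) := by
      apply glexLe_iff_le.1
      have := glexLe_smul_le (m := m) hk
      rwa [one_smul] at this
    omega
  have hmsgfin := msg2_finite hm hk
  have hins : insert m (ofP '' (Set.Ico (toP (k • m) + 1) (toP (k • m + m)))) ⊆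
      msg2 (multEmb k m) := Set.insert_subset (m_mem_msg2 hm hk) hAmsg
  have hcard1 : (ofP '' (Set.Ico (toP (k • m) + 1) (toP (k • m + m)))).ncard + 1 ≤
      (msg2 (multEmb k m)).ncard := by
    have h1 := Set.ncard_le_ncard hins hmsgfin
    rwa [Set.ncard_insert_of_notMem hmnotA hAfin] at h1
  have hE2 : 2 ≤ k * (m.1 + m.2) * (m.1 + m.2) + T (m.1 + m.2) + m.1 := by
    have t1 : 1 * 1 ≤ (k * (m.1 + m.2)) * (m.1 + m.2) :=
      Nat.mul_le_mul (Nat.mul_le_mul hk hd) hd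
    have t2 : T 1 ≤ T (m.1 + m.2) := T_mono hd
    have t3 : T 1 = 1 := rfl
    omega
  have heE : k * (m.1 + m.2) * (m.1 + m.2) + T (m.1 + m.2) + m.1 ≤
      (msg2 (multEmb k m)).ncard := by omega
  -- gamma bound
  have hγ : gamma2 (multEmb k m) ≤ nu2 (multEmb k m) + ((multEmb k m)ᶜ).ncard := by
    have hsub : {x : ℕ × ℕ | ∃ h, h ∉ multEmb k m ∧ x.1 ≤ h.1 ∧ x.2 ≤ h.2} ⊆
        ({x | x ∈ multEmb k m ∧ ∃ h, h ∉ multEmb k m ∧ x.1 ≤ h.1 ∧ x.2 ≤ h.2} ∪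
          (multEmb k m)ᶜ) := by
      rintro x ⟨h, hh, h1, h2⟩
      by_cases hx : x ∈ multEmb k m
      · exact Or.inl ⟨hx, h, hh, h1, h2⟩
      · exact Or.inr hx
    calc gamma2 (multEmb k m) ≤
        ({x | x ∈ multEmb k m ∧ ∃ h, h ∉ multEmb k m ∧ x.1 ≤ h.1 ∧ x.2 ≤ h.2} ∪
          (multEmb k m)ᶜ).ncard :=
          Set.ncard_le_ncard hsub (nuSet_finite.union compl_multEmb_finite)
      _ ≤ _ := Set.ncard_union_le _ _
  by_cases hm01 : m = ((0 : ℕ), (1 : ℕ))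
  · -- m = (0,1)
    subst hm01
    have hk2 : 2 ≤ k := by
      by_contra hc
      have hk1 : k = 1 := by omega
      subst hk1
      have e4 : T ((1 : ℕ) * (((0 : ℕ), (1 : ℕ)).1 + ((0 : ℕ), (1 : ℕ)).2)) = 1 := rfl
      have e3 : (1 : ℕ) * ((0 : ℕ), (1 : ℕ)).1 = 0 := rfl
      omega
    have hxg := xstar01 hk2
    have hxne : ((k + 1 : ℕ), (0 : ℕ)) ∉ insert ((0 : ℕ), (1 : ℕ))
        (ofP '' (Set.Ico (toP (k • ((0 : ℕ), (1 : ℕ))) + 1)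
          (toP (k • ((0 : ℕ), (1 : ℕ)) + ((0 : ℕ), (1 : ℕ)))))) := by
      intro hmem
      rcases hmem with he | hmem
      · rw [Prod.ext_iff] at he
        have := he.1
        simp at this
      · exact notA_of_ge (Or.inr ⟨by show k * 0 + 0 + (k * 1 + 1) = k + 1 + 0; omega,
          by show k * 0 + 0 ≤ k + 1; omega⟩) hmem
    have hins2 : insert ((k + 1 : ℕ), (0 : ℕ)) (insert ((0 : ℕ), (1 : ℕ))
        (ofP '' (Set.Ico (toP (k • ((0 : ℕ), (1 : ℕ))) + 1)
          (toP (k • ((0 : ℕ), (1 : ℕ)) + ((0 : ℕ), (1 : ℕ))))))) ⊆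
        msg2 (multEmb k ((0 : ℕ), (1 : ℕ))) := Set.insert_subset hxg hins
    have hcard2 : (ofP '' (Set.Ico (toP (k • ((0 : ℕ), (1 : ℕ))) + 1)
        (toP (k • ((0 : ℕ), (1 : ℕ)) + ((0 : ℕ), (1 : ℕ)))))).ncard + 2 ≤
        (msg2 (multEmb k ((0 : ℕ), (1 : ℕ)))).ncard := by
      have h1 := Set.ncard_le_ncard hins2 hmsgfin
      rwa [Set.ncard_insert_of_notMem hxne (hAfin.insert _),
        Set.ncard_insert_of_notMem hmnotA hAfin] at h1
    have ha1 : k * (((0 : ℕ), (1 : ℕ)).1 + ((0 : ℕ), (1 : ℕ)).2) = k := by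
      show k * (0 + 1) = k; omega
    have ha2 : k * ((0 : ℕ), (1 : ℕ)).1 = 0 := by show k * 0 = 0; omega
    have ha3 : k * (((0 : ℕ), (1 : ℕ)).1 + ((0 : ℕ), (1 : ℕ)).2) *
        (((0 : ℕ), (1 : ℕ)).1 + ((0 : ℕ), (1 : ℕ)).2) = k := by
      show k * (0 + 1) * (0 + 1) = k; omega
    have hT1 : T (((0 : ℕ), (1 : ℕ)).1 + ((0 : ℕ), (1 : ℕ)).2) = 1 := rfl
    have hm1z : (((0 : ℕ), (1 : ℕ)) : ℕ × ℕ).1 = 0 := rfl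
    rw [ha3, hT1, hm1z] at hQP
    rw [ha1, ha2] at hPval
    -- e ≥ k + 2
    have he : k + 2 ≤ (msg2 (multEmb k ((0 : ℕ), (1 : ℕ)))).ncard := by omega
    obtain ⟨k', rfl⟩ : ∃ k', k = k' + 2 := ⟨k - 2, by omega⟩
    apply epilogue hm hk hP hγ (nu_lower01 hk2) he (by omega)
    · -- 2g + 2(k'+1) ≤ (k'+1) * (k'+2+2)... here ν₀ = k'+2-1
      have htk := two_T (k' + 2)
      have r1 : (k' + 2) * (k' + 2 + 1) = k' * k' + 5 * k' + 6 := by ring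
      have r2 : (k' + 2 - 1) * (k' + 2 + 2) = k' * k' + 5 * k' + 4 := by
        have hx : k' + 2 - 1 = k' + 1 := by omega
        rw [hx]; ring
      omega
    · have htk := two_T (k' + 2)
      have r1 : (k' + 2) * (k' + 2 + 1) = k' * k' + 5 * k' + 6 := by ring
      have r2 : (k' + 2) * (k' + 2 + 2) = k' * k' + 6 * k' + 8 := by ring
      omega
  by_cases hm10 : m = ((1 : ℕ), (0 : ℕ))
  · subst hm10
    have hxg := xstar10 hk
    have hxne : ((0 : ℕ), k + 2) ∉ insert ((1 : ℕ), (0 : ℕ))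
        (ofP '' (Set.Ico (toP (k • ((1 : ℕ), (0 : ℕ))) + 1)
          (toP (k • ((1 : ℕ), (0 : ℕ)) + ((1 : ℕ), (0 : ℕ)))))) := by
      intro hmem
      rcases hmem with he | hmem
      · rw [Prod.ext_iff] at he
        have := he.2
        simp at this
      · exact notA_of_ge (Or.inl (by show k * 1 + 1 + (k * 0 + 0) < 0 + (k + 2); omega))
          hmem
    have hins2 : insert ((0 : ℕ), k + 2) (insert ((1 : ℕ), (0 : ℕ))
        (ofP '' (Set.Ico (toP (k • ((1 : ℕ), (0 : ℕ))) + 1)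
          (toP (k • ((1 : ℕ), (0 : ℕ)) + ((1 : ℕ), (0 : ℕ))))))) ⊆
        msg2 (multEmb k ((1 : ℕ), (0 : ℕ))) := Set.insert_subset hxg hins
    have hcard2 : (ofP '' (Set.Ico (toP (k • ((1 : ℕ), (0 : ℕ))) + 1)
        (toP (k • ((1 : ℕ), (0 : ℕ)) + ((1 : ℕ), (0 : ℕ)))))).ncard + 2 ≤
        (msg2 (multEmb k ((1 : ℕ), (0 : ℕ)))).ncard := by
      have h1 := Set.ncard_le_ncard hins2 hmsgfin
      rwa [Set.ncard_insert_of_notMem hxne (hAfin.insert _),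
        Set.ncard_insert_of_notMem hmnotA hAfin] at h1
    have ha1 : k * (((1 : ℕ), (0 : ℕ)).1 + ((1 : ℕ), (0 : ℕ)).2) = k := by
      show k * (1 + 0) = k; omega
    have ha2 : k * ((1 : ℕ), (0 : ℕ)).1 = k := by show k * 1 = k; omega
    have ha3 : k * (((1 : ℕ), (0 : ℕ)).1 + ((1 : ℕ), (0 : ℕ)).2) *
        (((1 : ℕ), (0 : ℕ)).1 + ((1 : ℕ), (0 : ℕ)).2) = k := by
      show k * (1 + 0) * (1 + 0) = k; omega
    have hT1 : T (((1 : ℕ), (0 : ℕ)).1 + ((1 : ℕ), (0 : ℕ)).2) = 1 := rfl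
    have hm1o : (((1 : ℕ), (0 : ℕ)) : ℕ × ℕ).1 = 1 := rfl
    rw [ha3, hT1, hm1o] at hQP
    rw [ha1, ha2] at hPval
    have he : k + 3 ≤ (msg2 (multEmb k ((1 : ℕ), (0 : ℕ)))).ncard := by omega
    apply epilogue hm hk hP hγ (nu_lower hm hk (by simp)) he (by omega)
    · have htk := two_T k
      have r1 : k * (k + 1) = k * k + k := by ring
      have r2 : k * (k + 3) = k * k + 3 * k := by ring
      omega
    · have htk := two_T k
      have r1 : k * (k + 1) = k * k + k := by ring
      have r2 : k * (k + 3) = k * k + 3 * k := by ring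
      omega
  by_cases hm20 : m = ((2 : ℕ), (0 : ℕ))
  · subst hm20
    have hxg := xstar20 hk
    have hxne : ((1 : ℕ), 2 * k + 2) ∉ insert ((2 : ℕ), (0 : ℕ))
        (ofP '' (Set.Ico (toP (k • ((2 : ℕ), (0 : ℕ))) + 1)
          (toP (k • ((2 : ℕ), (0 : ℕ)) + ((2 : ℕ), (0 : ℕ)))))) := by
      intro hmem
      rcases hmem with he | hmem
      · rw [Prod.ext_iff] at he
        have := he.1
        simp at this
      · exact notA_of_ge (Or.inl (by
          show k * 2 + 2 + (k * 0 + 0) < 1 + (2 * k + 2); omega)) hmem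
    have hins2 : insert ((1 : ℕ), 2 * k + 2) (insert ((2 : ℕ), (0 : ℕ))
        (ofP '' (Set.Ico (toP (k • ((2 : ℕ), (0 : ℕ))) + 1)
          (toP (k • ((2 : ℕ), (0 : ℕ)) + ((2 : ℕ), (0 : ℕ))))))) ⊆
        msg2 (multEmb k ((2 : ℕ), (0 : ℕ))) := Set.insert_subset hxg hins
    have hcard2 : (ofP '' (Set.Ico (toP (k • ((2 : ℕ), (0 : ℕ))) + 1)
        (toP (k • ((2 : ℕ), (0 : ℕ)) + ((2 : ℕ), (0 : ℕ)))))).ncard + 2 ≤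
        (msg2 (multEmb k ((2 : ℕ), (0 : ℕ)))).ncard := by
      have h1 := Set.ncard_le_ncard hins2 hmsgfin
      rwa [Set.ncard_insert_of_notMem hxne (hAfin.insert _),
        Set.ncard_insert_of_notMem hmnotA hAfin] at h1
    have ha1 : k * (((2 : ℕ), (0 : ℕ)).1 + ((2 : ℕ), (0 : ℕ)).2) = 2 * k := by
      show k * (2 + 0) = 2 * k; omega
    have ha2 : k * ((2 : ℕ), (0 : ℕ)).1 = 2 * k := by show k * 2 = 2 * k; omega
    have ha3 : k * (((2 : ℕ), (0 : ℕ)).1 + ((2 : ℕ), (0 : ℕ)).2) *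
        (((2 : ℕ), (0 : ℕ)).1 + ((2 : ℕ), (0 : ℕ)).2) = 4 * k := by
      show k * (2 + 0) * (2 + 0) = 4 * k; omega
    have hT2 : T (((2 : ℕ), (0 : ℕ)).1 + ((2 : ℕ), (0 : ℕ)).2) = 3 := rfl
    have hm12 : (((2 : ℕ), (0 : ℕ)) : ℕ × ℕ).1 = 2 := rfl
    rw [ha3, hT2, hm12] at hQP
    rw [ha1, ha2] at hPval
    have he : 4 * k + 6 ≤ (msg2 (multEmb k ((2 : ℕ), (0 : ℕ)))).ncard := by omega
    apply epilogue hm hk hP hγ (nu_lower hm hk (by simp)) he (by omega)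
    · have htk := two_T (2 * k)
      have r1 : 2 * k * (2 * k + 1) = 4 * (k * k) + 2 * k := by ring
      have r2 : k * (4 * k + 6) = 4 * (k * k) + 6 * k := by ring
      omega
    · have htk := two_T (2 * k)
      have r1 : 2 * k * (2 * k + 1) = 4 * (k * k) + 2 * k := by ring
      have r2 : k * (4 * k + 6) = 4 * (k * k) + 6 * k := by ring
      omega
  -- general case
  have hTd : (m.1 + m.2) + m.1 ≤ T (m.1 + m.2) := by
    rcases Nat.lt_or_ge (m.1 + m.2) 3 with hlt | hge
    · have hcase : m.1 + m.2 = 1 ∨ m.1 + m.2 = 2 := by omega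
      rcases hcase with h1 | h2
      · exfalso
        rcases m with ⟨a, b⟩
        simp only at h1
        rcases Nat.lt_or_ge a 1 with ha | ha
        · exact hm01 (by rw [Prod.ext_iff]; constructor <;> simp <;> omega)
        · exact hm10 (by rw [Prod.ext_iff]; constructor <;> simp <;> omega)
      · have hm1le : m.1 ≤ 1 := by
          by_contra hc
          push_neg at hc
          apply hm20
          rcases m with ⟨a, b⟩
          simp only at h2 hc ⊢
          rw [Prod.ext_iff]
          constructor <;> simp <;> omega
        rw [h2]
        have : T 2 = 3 := rfl
        omega
    · have htk := two_T (m.1 + m.2)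
      have r1 : (m.1 + m.2) * ((m.1 + m.2) + 1) =
          (m.1 + m.2) * (m.1 + m.2) + (m.1 + m.2) := by ring
      have r2 : 3 * (m.1 + m.2) ≤ (m.1 + m.2) * (m.1 + m.2) :=
        Nat.mul_le_mul_right _ hge
      omega
  apply epilogue hm hk hP hγ (nu_lower hm hk hm01) heE hE2
  · have hx1 : k * ((m.1 + m.2) + m.1) ≤ k * T (m.1 + m.2) := Nat.mul_le_mul_left k hTd
    have r1 : k * (k * (m.1 + m.2) * (m.1 + m.2) + T (m.1 + m.2) + m.1) =
        k * (k * (m.1 + m.2) * (m.1 + m.2)) + k * T (m.1 + m.2) + k * m.1 := by ring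
    have r2 := two_T (k * (m.1 + m.2))
    have r3 : (k * (m.1 + m.2)) * (k * (m.1 + m.2) + 1) =
        k * (k * (m.1 + m.2) * (m.1 + m.2)) + k * (m.1 + m.2) := by ring
    have r4 : k * ((m.1 + m.2) + m.1) = k * (m.1 + m.2) + k * m.1 := by ring
    omega
  · have hx1 : k * ((m.1 + m.2) + m.1) ≤ k * T (m.1 + m.2) := Nat.mul_le_mul_left k hTd
    have r1 : k * (k * (m.1 + m.2) * (m.1 + m.2) + T (m.1 + m.2) + m.1) =
        k * (k * (m.1 + m.2) * (m.1 + m.2)) + k * T (m.1 + m.2) + k * m.1 := by ring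
    have r2 := two_T (k * (m.1 + m.2))
    have r3 : (k * (m.1 + m.2)) * (k * (m.1 + m.2) + 1) =
        k * (k * (m.1 + m.2) * (m.1 + m.2)) + k * (m.1 + m.2) := by ring
    have r4 : k * ((m.1 + m.2) + m.1) = k * (m.1 + m.2) + k * m.1 := by ring
    omega
end
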